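/- arXiv:cs/0401021 — 3 statements merged into one kernel-verified Lean document; each statement's English description precedes it below -/
import Mathlib

section
/- Let T be a syntactic equality theory and let σ, τ ∈ RSubst both be satisfiable in T, with T ⊢ ∀(σ ↔ τ) (the universal closure of the biconditional of the two substitutions viewed as conjunctions of equations). Then ssets(σ) = ssets(τ), gvars(σ) = gvars(τ), fvars(σ) = fvars(τ), and lvars(σ) = lvars(τ). -/
open Classical

noncomputable section

/-- Finite terms over a ranked signature `Sig` (with arity function `ar`)
and variables taken from `Vr`. -/
inductive HTerm (Sig : Type) (ar : Sig → ℕ) (Vr : Type) : Type where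
  | var : Vr → HTerm Sig ar Vr
  | app : (f : Sig) → (Fin (ar f) → HTerm Sig ar Vr) → HTerm Sig ar Vr

namespace HTerm

variable {Sig : Type} {ar : Sig → ℕ} {Vr : Type}

/-- The set of variables occurring in a term. -/
def vars : HTerm Sig ar Vr → Set Vr
  | var x => {x}
  | app _ ts => ⋃ i, (ts i).vars

/-- The number of occurrences of the variable `z` in a term. -/
def count (z : Vr) : HTerm Sig ar Vr → ℕ
  | var x => if x = z then 1 else 0
  | app _ ts => ∑ i, (ts i).count z

/-- Application of a (raw) substitution to a term. -/
def substApp (σ : Vr → HTerm Sig ar Vr) : HTerm Sig ar Vr → HTerm Sig ar Vr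
  | var x => σ x
  | app f ts => app f (fun i => (ts i).substApp σ)

end HTerm

/-- A substitution: a map from variables to finite terms that is the identity
almost everywhere. -/
structure Subst (Sig : Type) (ar : Sig → ℕ) (Vr : Type) where
  toFun : Vr → HTerm Sig ar Vr
  finite_dom : {x : Vr | toFun x ≠ HTerm.var x}.Finite

namespace Subst

variable {Sig : Type} {ar : Sig → ℕ} {Vr : Type}

/-- The domain of a substitution. -/
def dom (σ : Subst Sig ar Vr) : Set Vr := {x | σ.toFun x ≠ HTerm.var x}

/-- The number of bindings `#σ`. -/
def nb (σ : Subst Sig ar Vr) : ℕ := σ.finite_dom.toFinset.card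

/-- `iterApp σ i t` is `t σ^i`, the `i`-fold application of `σ` to `t`. -/
def iterApp (σ : Subst Sig ar Vr) (i : ℕ) (t : HTerm Sig ar Vr) : HTerm Sig ar Vr :=
  (HTerm.substApp σ.toFun)^[i] t

/-- `σ` has a circular subset `{x₁↦x₂, …, x_{n-1}↦xₙ, xₙ↦x₁}` with `n > 1`
distinct variables. -/
def HasCircularSubset (σ : Subst Sig ar Vr) : Prop :=
  ∃ n : ℕ, ∃ _h : 1 < n, ∃ x : Fin n → Vr, Function.Injective x ∧
    ∀ i : Fin n, σ.toFun (x i) = HTerm.var (x ⟨(i.1 + 1) % n, Nat.mod_lt _ (by omega)⟩)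

/-- `σ` is in rational solved form: it has no circular subset. -/
def IsRSubst (σ : Subst Sig ar Vr) : Prop := ¬ σ.HasCircularSubset

/-- The occurrence operator: `occ σ v = {y | v ∈ vars(y σ^n) \ dom σ}` where `n = #σ`. -/
def occ (σ : Subst Sig ar Vr) (v : Vr) : Set Vr :=
  {y | v ∈ (σ.iterApp σ.nb (HTerm.var y)).vars ∧ v ∉ σ.dom}

/-- The freeness operator: `fvars σ = {y | y σ^n ∈ Vars}` where `n = #σ`. -/
def fvars (σ : Subst Sig ar Vr) : Set Vr :=
  {y | ∃ z : Vr, σ.iterApp σ.nb (HTerm.var y) = HTerm.var z}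

/-- The groundness operator. -/
def gvars (σ : Subst Sig ar Vr) : Set Vr :=
  {y | y ∈ σ.dom ∧ ∀ v : Vr, y ∉ σ.occ v}

/-- The linearity operator: every non-domain variable of `y σ^n` occurs exactly
once in `y σ^{2n}`, where `n = #σ`. -/
def lvars (σ : Subst Sig ar Vr) : Set Vr :=
  {y | ∀ z ∈ (σ.iterApp σ.nb (HTerm.var y)).vars, z ∉ σ.dom →
        (σ.iterApp (2 * σ.nb) (HTerm.var y)).count z = 1}

/-- The sharing-sets operator: `ssets σ VI = {occ(σ,v) ∩ VI | v ∈ Vars} \ {∅}`. -/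
def ssets (σ : Subst Sig ar Vr) (VI : Set Vr) : Set (Set Vr) :=
  {g | (∃ v : Vr, g = σ.occ v ∩ VI) ∧ g ≠ ∅}

/-- The set of variables occurring in (the bindings of) a substitution. -/
def varsOf (σ : Subst Sig ar Vr) : Set Vr :=
  ⋃ x ∈ σ.dom, ({x} ∪ (σ.toFun x).vars)

end Subst

/-- A first-order interpretation (model) of the signature: a carrier together
with an interpretation of each function symbol. -/
structure Interp (Sig : Type) (ar : Sig → ℕ) : Type 1 where
  carrier : Type
  interp : (f : Sig) → (Fin (ar f) → carrier) → carrier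

namespace Interp

variable {Sig : Type} {ar : Sig → ℕ} {Vr : Type}

/-- Evaluation of a term in an interpretation under a valuation of the variables. -/
def eval (M : Interp Sig ar) (ν : Vr → M.carrier) : HTerm Sig ar Vr → M.carrier
  | HTerm.var x => ν x
  | HTerm.app f ts => M.interp f (fun i => M.eval ν (ts i))

/-- `M` satisfies the identity axioms: function symbols are injective and
terms with distinct outermost function symbols are unequal. -/
def SatisfiesIdentity (M : Interp Sig ar) : Prop :=
  (∀ (f : Sig) (a b : Fin (ar f) → M.carrier), M.interp f a = M.interp f b → a = b) ∧
  (∀ (f g : Sig) (a : Fin (ar f) → M.carrier) (b : Fin (ar g) → M.carrier),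
      f ≠ g → M.interp f a ≠ M.interp g b)

/-- `M` satisfies a set of equations under a valuation. -/
def SatEqs (M : Interp Sig ar) (ν : Vr → M.carrier)
    (e : Set (HTerm Sig ar Vr × HTerm Sig ar Vr)) : Prop :=
  ∀ p ∈ e, M.eval ν p.1 = M.eval ν p.2

/-- `M` satisfies the occurs-check axioms (for variables in `Vr`). -/
def SatisfiesOC (M : Interp Sig ar) (Vr : Type) : Prop :=
  ∀ (t : HTerm Sig ar Vr) (z : Vr), (∀ y : Vr, t ≠ HTerm.var y) → z ∈ t.vars →
    ∀ ν : Vr → M.carrier, M.eval ν t ≠ ν z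

end Interp

/-- The set of equations corresponding to a substitution:
`{x = σ(x) | x ∈ dom σ}`. -/
def eqsOf {Sig : Type} {ar : Sig → ℕ} {Vr : Type} (σ : Subst Sig ar Vr) :
    Set (HTerm Sig ar Vr × HTerm Sig ar Vr) :=
  {p | ∃ x ∈ σ.dom, p = (HTerm.var x, σ.toFun x)}

/-- A theory is identified (semantically) with its class of models; a
syntactic equality theory is a consistent theory all of whose models
satisfy the (congruence and) identity axioms. -/
def IsSyntacticTheory {Sig : Type} {ar : Sig → ℕ} (T : Set (Interp Sig ar)) : Prop :=
  T.Nonempty ∧ ∀ M ∈ T, M.SatisfiesIdentity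

/-- `σ` is satisfiable in `T`: in every model of `T`, every valuation of the
non-domain variables extends to a valuation satisfying `σ`;
semantically, `T ⊢ ∀ (Vars \ dom σ) : ∃ dom σ . σ`. -/
def SatisfiableIn {Sig : Type} {ar : Sig → ℕ} {Vr : Type}
    (T : Set (Interp Sig ar)) (σ : Subst Sig ar Vr) : Prop :=
  ∀ M ∈ T, ∀ ν : Vr → M.carrier, ∃ ν' : Vr → M.carrier,
    (∀ x ∉ σ.dom, ν' x = ν x) ∧ M.SatEqs ν' (eqsOf σ)

/-- `T ⊢ ∀ (σ ↔ τ)`, semantically. -/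
def EquivIn {Sig : Type} {ar : Sig → ℕ} {Vr : Type}
    (T : Set (Interp Sig ar)) (σ τ : Subst Sig ar Vr) : Prop :=
  ∀ M ∈ T, ∀ ν : Vr → M.carrier, M.SatEqs ν (eqsOf σ) ↔ M.SatEqs ν (eqsOf τ)

/-!
Since `σ` and `τ` have the same solutions, they entail the same equality `E` between terms.
By the identity axioms, `E`-equal applications have the same head and `E`-equal arguments, and by
satisfiability a variable outside the domain is `E`-equal neither to an application nor to another
such variable. Following an occurrence of a free variable `v` of `σ` down a term along `E` thus
leads to an occurrence of the unique free variable `u` of `τ` with `u = v` in `E`, and two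
occurrences lead to two. Hence `occ(σ, v) = occ(τ, u)`, which gives `ssets` and `gvars`; the same
descent gives `fvars` and `lvars`. The exponents `#σ` and `2 #σ` suffice because the first step
at which an occurrence (or a double occurrence) of a free variable appears strictly decreases
along a chain of bound variables, which are therefore distinct.
-/

theorem Fintype.exists_two_le_or_exists_ne_of_two_le_sum {ι : Type*} [Fintype ι] (g : ι → ℕ)
    (h : 2 ≤ ∑ i, g i) : (∃ i, 2 ≤ g i) ∨ ∃ i j, i ≠ j ∧ 0 < g i ∧ 0 < g j := by
  by_contra! hc
  obtain ⟨hle, hsupp⟩ := hc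
  by_cases hpos : ∃ i, 0 < g i
  · obtain ⟨i, hi⟩ := hpos
    have hsum : ∑ j, g j = g i :=
      Fintype.sum_eq_single i fun j hj => Nat.le_zero.mp (hsupp i j hj.symm hi)
    linarith [hle i]
  · push Not at hpos
    simp [Nat.eq_zero_of_le_zero (hpos _)] at h

namespace HTerm

variable {Sig : Type} {ar : Sig → ℕ} {Vr : Type}

@[simp]
theorem mem_vars_var {x z : Vr} : z ∈ (var x : HTerm Sig ar Vr).vars ↔ z = x :=
  Set.mem_singleton_iff

@[simp]
theorem mem_vars_app {f : Sig} {ts : Fin (ar f) → HTerm Sig ar Vr} {z : Vr} :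
    z ∈ (app f ts).vars ↔ ∃ i, z ∈ (ts i).vars :=
  Set.mem_iUnion

theorem count_var_le_one (x z : Vr) : (var x : HTerm Sig ar Vr).count z ≤ 1 := by
  simp only [count]
  split <;> omega

theorem count_app (f : Sig) (ts : Fin (ar f) → HTerm Sig ar Vr) (z : Vr) :
    (app f ts).count z = ∑ i, (ts i).count z :=
  rfl

theorem count_le_count_app {f : Sig} (ts : Fin (ar f) → HTerm Sig ar Vr) (i : Fin (ar f))
    (z : Vr) : (ts i).count z ≤ (app f ts).count z :=
  Finset.single_le_sum (fun j _ => Nat.zero_le ((ts j).count z)) (Finset.mem_univ i)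

theorem count_add_count_le_count_app {f : Sig} (ts : Fin (ar f) → HTerm Sig ar Vr)
    {i j : Fin (ar f)} (hij : i ≠ j) (z : Vr) :
    (ts i).count z + (ts j).count z ≤ (app f ts).count z := by
  rw [count_app, ← Finset.sum_pair (f := fun k => (ts k).count z) hij]
  exact Finset.sum_le_sum_of_subset (Finset.subset_univ _)

theorem count_pos_iff {t : HTerm Sig ar Vr} {z : Vr} : 0 < t.count z ↔ z ∈ t.vars := by
  induction t with
  | var x => by_cases h : x = z <;> simp [count, h, Ne.symm]
  | app f ts ih => simp [count_app, Finset.sum_pos_iff, ih]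

theorem substApp_app (F : Vr → HTerm Sig ar Vr) (f : Sig) (ts : Fin (ar f) → HTerm Sig ar Vr) :
    (app f ts).substApp F = app f fun i => (ts i).substApp F :=
  rfl

theorem mem_vars_substApp {F : Vr → HTerm Sig ar Vr} {t : HTerm Sig ar Vr} {z : Vr} :
    z ∈ (t.substApp F).vars ↔ ∃ y ∈ t.vars, z ∈ (F y).vars := by
  induction t with
  | var x => simp [substApp]
  | app f ts ih =>
    simp only [substApp_app, mem_vars_app, ih]
    exact exists_comm.trans (exists_congr fun y => by simp [exists_and_right])

theorem count_le_count_substApp {F : Vr → HTerm Sig ar Vr} {t : HTerm Sig ar Vr} {y : Vr}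
    (hy : y ∈ t.vars) (z : Vr) : (F y).count z ≤ (t.substApp F).count z := by
  induction t with
  | var x => rw [mem_vars_var.mp hy]; rfl
  | app f ts ih =>
    obtain ⟨i, hi⟩ := mem_vars_app.mp hy
    exact (ih i hi).trans (count_le_count_app (fun i => (ts i).substApp F) i z)

theorem count_le_count_substApp_self {F : Vr → HTerm Sig ar Vr} {z : Vr} (hz : F z = var z)
    (t : HTerm Sig ar Vr) : t.count z ≤ (t.substApp F).count z := by
  induction t with
  | var x =>
    by_cases hx : x = z
    · subst hx; simp [substApp, hz]
    · simp [count, hx]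
  | app f ts ih => exact Finset.sum_le_sum fun i _ => ih i

theorem exists_two_le_count_or_two_le_count_substApp {F G : Vr → HTerm Sig ar Vr} {z : Vr}
    (hFG : ∀ y, z ∈ (F y).vars → z ∈ (G y).vars) {t : HTerm Sig ar Vr}
    (h : 2 ≤ (t.substApp F).count z) :
    (∃ y ∈ t.vars, 2 ≤ (F y).count z) ∨ 2 ≤ (t.substApp G).count z := by
  induction t with
  | var x => exact Or.inl ⟨x, by simp, h⟩
  | app f ts ih =>
    rcases Fintype.exists_two_le_or_exists_ne_of_two_le_sum _ h with
      ⟨i, hi⟩ | ⟨i, j, hij, hi, hj⟩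
    · exact (ih i hi).imp (fun ⟨y, hy, hy2⟩ => ⟨y, mem_vars_app.mpr ⟨i, hy⟩, hy2⟩)
        fun h2 => h2.trans (count_le_count_app (fun i => (ts i).substApp G) i z)
    · have hG : ∀ k, 0 < ((ts k).substApp F).count z → 0 < ((ts k).substApp G).count z := by
        intro k hk
        obtain ⟨y, hy, hzy⟩ := mem_vars_substApp.mp (count_pos_iff.mp hk)
        exact count_pos_iff.mpr (mem_vars_substApp.mpr ⟨y, hy, hFG y hzy⟩)
      have := count_add_count_le_count_app (fun k => (ts k).substApp G) hij z
      exact Or.inr (by have := hG i hi; have := hG j hj; simp only [substApp_app]; omega)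

end HTerm

open Finset in
/-- Along a descent the first indices are distinct, so the indices `L, …, k` inject into `S`. -/
theorem exists_le_of_isLeast_descent {α : Type*} {P : ℕ → α → Prop} {S : Finset α}
    {L : ℕ}
    (hdesc : ∀ j ≥ L, ∀ x, IsLeast {i | P i x} (j + 1) → ∃ y, IsLeast {i | P i y} j)
    (hS : ∀ j ≥ L, ∀ y, IsLeast {i | P i y} j → y ∈ S) {k : ℕ} {u : α} (hu : P k u) :
    ∃ j, j + 1 ≤ L + #S ∧ P j u := by
  have hex : ∃ i, P i u := ⟨k, hu⟩
  refine ⟨Nat.find hex, ?_, Nat.find_spec hex⟩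
  have hwit : ∀ j ∈ Icc L (Nat.find hex), ∃ y, IsLeast {i | P i y} j := by
    intro j hj
    obtain ⟨hLj, hjk⟩ := mem_Icc.mp hj
    clear hj
    induction hjk using Nat.decreasingInduction with
    | self => exact ⟨u, Nat.isLeast_find hex⟩
    | of_succ j _ ih =>
      obtain ⟨x, hx⟩ := ih (by omega)
      exact hdesc j hLj x hx
  have : Nonempty α := ⟨u⟩
  choose! w hw using hwit
  have hcard : #(Icc L (Nat.find hex)) ≤ #S :=
    card_le_card_of_injOn w (fun j hj => hS j (mem_Icc.mp hj).1 _ (hw j hj))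
      fun j₁ hj₁ j₂ hj₂ h => (hw j₁ hj₁).unique (h ▸ hw j₂ hj₂)
  rw [Nat.card_Icc] at hcard
  omega

namespace Subst

open HTerm

variable {Sig : Type} {ar : Sig → ℕ} {Vr : Type} (σ : Subst Sig ar Vr)

theorem iterApp_succ (k : ℕ) (t : HTerm Sig ar Vr) :
    σ.iterApp (k + 1) t = σ.iterApp k (t.substApp σ.toFun) :=
  Function.iterate_succ_apply _ _ _

theorem iterApp_succ' (k : ℕ) (t : HTerm Sig ar Vr) :
    σ.iterApp (k + 1) t = (σ.iterApp k t).substApp σ.toFun :=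
  Function.iterate_succ_apply' _ _ _

theorem iterApp_add (j k : ℕ) (t : HTerm Sig ar Vr) :
    σ.iterApp (j + k) t = σ.iterApp j (σ.iterApp k t) :=
  Function.iterate_add_apply _ _ _ _

theorem iterApp_app (k : ℕ) (f : Sig) (ts : Fin (ar f) → HTerm Sig ar Vr) :
    σ.iterApp k (app f ts) = app f fun i => σ.iterApp k (ts i) := by
  induction k with
  | zero => rfl
  | succ k ih => simp only [iterApp_succ', ih, substApp_app]

theorem iterApp_eq_substApp (k : ℕ) (t : HTerm Sig ar Vr) :
    σ.iterApp k t = t.substApp fun y => σ.iterApp k (var y) := by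
  induction t with
  | var x => rfl
  | app f ts ih => simp only [iterApp_app, substApp_app, ih]

theorem iterApp_succ_var (k : ℕ) (x : Vr) :
    σ.iterApp (k + 1) (var x) = (σ.toFun x).substApp fun y => σ.iterApp k (var y) := by
  rw [iterApp_succ, iterApp_eq_substApp]
  rfl

variable {σ}

theorem notMem_dom_iff {x : Vr} : x ∉ σ.dom ↔ σ.toFun x = var x := by
  simp [dom]

theorem iterApp_var_of_notMem_dom {x : Vr} (hx : x ∉ σ.dom) (k : ℕ) :
    σ.iterApp k (var x) = var x := by
  induction k with
  | zero => rfl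
  | succ k ih => rw [iterApp_succ', ih]; exact notMem_dom_iff.mp hx

theorem count_iterApp_mono {z : Vr} (hz : z ∉ σ.dom) (t : HTerm Sig ar Vr) :
    Monotone fun k => (σ.iterApp k t).count z :=
  monotone_nat_of_le_succ fun k => by
    simpa only [iterApp_succ'] using count_le_count_substApp_self (notMem_dom_iff.mp hz) _

theorem mem_vars_iterApp_mono {z : Vr} (hz : z ∉ σ.dom) (t : HTerm Sig ar Vr) {k k' : ℕ}
    (hk : k ≤ k') (h : z ∈ (σ.iterApp k t).vars) : z ∈ (σ.iterApp k' t).vars :=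
  count_pos_iff.mp ((count_pos_iff.mpr h).trans_le (count_iterApp_mono hz t hk))

theorem mem_vars_iterApp_var_nb {z x : Vr} (hz : z ∉ σ.dom) {k : ℕ}
    (h : z ∈ (σ.iterApp k (var x)).vars) : z ∈ (σ.iterApp σ.nb (var x)).vars := by
  set P : ℕ → Vr → Prop := fun i y => z ∈ (σ.iterApp i (var y)).vars
  have hstep : ∀ i x, ∀ y ∈ (σ.toFun x).vars, P i y → P (i + 1) x := fun i x y hy hzy => by
    simp only [P, iterApp_succ_var]
    exact mem_vars_substApp.mpr ⟨y, hy, hzy⟩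
  have hdesc : ∀ j ≥ 1, ∀ x, IsLeast {i | P i x} (j + 1) →
      ∃ y, IsLeast {i | P i y} j := by
    intro j _ x hx
    have hxj : P (j + 1) x := hx.1
    simp only [P, iterApp_succ_var] at hxj
    obtain ⟨y, hy, hzy⟩ := mem_vars_substApp.mp hxj
    exact ⟨y, hzy, fun i hi => Nat.le_of_succ_le_succ (hx.2 (hstep i x y hy hi))⟩
  have hdom : ∀ j ≥ 1, ∀ y, IsLeast {i | P i y} j → y ∈ σ.finite_dom.toFinset := by
    intro j hj y hy
    rw [Set.Finite.mem_toFinset]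
    by_contra hyd
    have hyj : z ∈ (σ.iterApp j (var y)).vars := hy.1
    rw [iterApp_var_of_notMem_dom hyd] at hyj
    exact absurd (hy.2 hyj : j ≤ 0) (by omega)
  obtain ⟨j, hj, hzj⟩ := exists_le_of_isLeast_descent hdesc hdom h
  exact mem_vars_iterApp_mono hz _ (by rw [nb]; omega) hzj

theorem mem_vars_iterApp_nb {z : Vr} (hz : z ∉ σ.dom) {t : HTerm Sig ar Vr} {k : ℕ}
    (h : z ∈ (σ.iterApp k t).vars) : z ∈ (σ.iterApp σ.nb t).vars := by
  rw [iterApp_eq_substApp, mem_vars_substApp] at h ⊢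
  obtain ⟨y, hy, hzy⟩ := h
  exact ⟨y, hy, mem_vars_iterApp_var_nb hz hzy⟩

theorem two_le_count_iterApp_var_two_mul_nb {z x : Vr} (hz : z ∉ σ.dom) {k : ℕ}
    (h : 2 ≤ (σ.iterApp k (var x)).count z) :
    2 ≤ (σ.iterApp (2 * σ.nb) (var x)).count z := by
  set P : ℕ → Vr → Prop := fun i y => 2 ≤ (σ.iterApp i (var y)).count z
  have hunfold : ∀ i x, P (i + 1) x ↔
      2 ≤ ((σ.toFun x).substApp fun y => σ.iterApp i (var y)).count z := fun i x => by
    simp only [P, iterApp_succ_var]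
  -- a double occurrence spread over two variables of `σ x` is already there after `#σ + 1` steps
  have hdesc : ∀ j ≥ σ.nb + 1, ∀ x, IsLeast {i | P i x} (j + 1) →
      ∃ y, IsLeast {i | P i y} j := by
    intro j hj x hx
    rcases exists_two_le_count_or_two_le_count_substApp
      (G := fun y => σ.iterApp σ.nb (var y)) (fun y => mem_vars_iterApp_var_nb hz)
      ((hunfold j x).mp hx.1) with ⟨y, hy, hzy⟩ | hnb
    · refine ⟨y, hzy, fun i hi => Nat.le_of_succ_le_succ (hx.2 ?_)⟩
      exact (hunfold i x).mpr (hi.trans (count_le_count_substApp hy z))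
    · have := hx.2 ((hunfold σ.nb x).mpr hnb)
      omega
  have hdom : ∀ j ≥ σ.nb + 1, ∀ y, IsLeast {i | P i y} j →
      y ∈ σ.finite_dom.toFinset := by
    intro j _ y hy
    rw [Set.Finite.mem_toFinset]
    by_contra hyd
    have hyj : 2 ≤ (σ.iterApp j (var y)).count z := hy.1
    rw [iterApp_var_of_notMem_dom hyd] at hyj
    linarith [count_var_le_one (Sig := Sig) (ar := ar) y z]
  obtain ⟨j, hj, hzj⟩ := exists_le_of_isLeast_descent hdesc hdom h
  exact hzj.trans (count_iterApp_mono hz _ (by rw [nb] at hj ⊢; omega))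

theorem two_le_count_iterApp_two_mul_nb {z : Vr} (hz : z ∉ σ.dom) {t : HTerm Sig ar Vr}
    {k : ℕ} (h : 2 ≤ (σ.iterApp k t).count z) : 2 ≤ (σ.iterApp (2 * σ.nb) t).count z := by
  rw [iterApp_eq_substApp] at h
  rcases exists_two_le_count_or_two_le_count_substApp (G := fun y => σ.iterApp σ.nb (var y))
    (fun y => mem_vars_iterApp_var_nb hz) h with ⟨y, hy, hzy⟩ | hnb
  · rw [iterApp_eq_substApp]
    exact (two_le_count_iterApp_var_two_mul_nb hz hzy).trans
      (count_le_count_substApp (F := fun y => σ.iterApp (2 * σ.nb) (var y)) hy z)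
  · rw [← iterApp_eq_substApp] at hnb
    exact hnb.trans (count_iterApp_mono hz t (by omega))

open Function

variable (σ) in
def varStep (x : Vr) : Vr :=
  match σ.toFun x with
  | var y => y
  | app _ _ => x

theorem varStep_eq_of_toFun_eq_var {x y : Vr} (h : σ.toFun x = var y) : σ.varStep x = y := by
  simp [varStep, h]

theorem eq_iterate_varStep_of_iterApp_eq_var {y w : Vr} {k : ℕ}
    (h : σ.iterApp k (var y) = var w) : w = σ.varStep^[k] y := by
  induction k generalizing w with
  | zero => exact (var.inj h).symm
  | succ k ih =>
    rw [iterApp_succ'] at h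
    cases hk : σ.iterApp k (var y) with
    | var w' =>
      rw [hk] at h
      rw [iterate_succ_apply', ← ih hk, varStep_eq_of_toFun_eq_var h]
    | app f ts => rw [hk] at h; cases h

theorem iterApp_var_eq_iterate_varStep_of_le {y w : Vr} {i k : ℕ}
    (h : σ.iterApp k (var y) = var w) (hik : i ≤ k) :
    σ.iterApp i (var y) = var (σ.varStep^[i] y) := by
  cases hi : σ.iterApp i (var y) with
  | var w' => rw [← eq_iterate_varStep_of_iterApp_eq_var hi]
  | app f ts =>
    rw [← Nat.sub_add_cancel hik, iterApp_add, hi, iterApp_app] at h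
    cases h

theorem hasCircularSubset_of_isPeriodicPt {x : Vr} {n : ℕ} (hn : 0 < n) (hx : x ∈ σ.dom)
    (hper : IsPeriodicPt σ.varStep n x)
    (hstep : ∀ k < n, σ.toFun (σ.varStep^[k] x) = var (σ.varStep^[k + 1] x)) :
    σ.HasCircularSubset := by
  set p := minimalPeriod σ.varStep x
  have hpn : p ≤ n := hper.minimalPeriod_le hn
  have hp1 : p ≠ 1 := fun hp => hx <| by
    simpa [(minimalPeriod_eq_one_iff_isFixedPt.mp hp).eq] using hstep 0 hn
  refine ⟨p, by have := hper.minimalPeriod_pos hn; omega, fun i => σ.varStep^[i] x,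
    fun i j hij => Fin.ext (iterate_injOn_Iio_minimalPeriod i.2 j.2 hij), fun i => ?_⟩
  rw [hstep i (by omega)]
  exact congrArg var iterate_mod_minimalPeriod_eq.symm

/-- In rational solved form a chain of variable bindings cannot revisit a variable, so after
`#σ` steps a variable has reached a variable outside the domain. -/
theorem notMem_dom_of_iterApp_nb_eq_var (hσ : σ.IsRSubst) {t : HTerm Sig ar Vr} {z : Vr}
    (h : σ.iterApp σ.nb t = var z) : z ∉ σ.dom := by
  cases t with
  | app f ts => rw [iterApp_app] at h; cases h
  | var y =>
    intro hz
    set g : ℕ → Vr := fun k => σ.varStep^[k] y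
    have hchain : ∀ k ≤ σ.nb, σ.iterApp k (var y) = var (g k) :=
      fun k hk => iterApp_var_eq_iterate_varStep_of_le h hk
    have hdom : ∀ k ≤ σ.nb, g k ∈ σ.dom := by
      intro k hk
      by_contra hgk
      rw [← Nat.sub_add_cancel hk, iterApp_add, hchain k hk,
        iterApp_var_of_notMem_dom hgk] at h
      exact hgk (by rwa [var.inj h])
    have hstep : ∀ k < σ.nb, σ.toFun (g k) = var (g (k + 1)) := fun k hk => by
      rw [← hchain (k + 1) hk, iterApp_succ', hchain k hk.le]
      rfl
    obtain ⟨i, hi, j, hj, hij, hg⟩ := Finset.exists_ne_map_eq_of_card_lt_of_maps_to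
      (s := Finset.range (σ.nb + 1)) (t := σ.finite_dom.toFinset) (f := g)
      (by rw [Finset.card_range, nb]; omega)
      (fun k hk => (Set.Finite.mem_toFinset _).mpr (hdom k (by simpa [Nat.lt_succ_iff] using hk)))
    rw [Finset.mem_range] at hi hj
    wlog hlt : i < j generalizing i j
    · exact this j hj i hi hij.symm hg.symm (by omega)
    have hshift : ∀ k, σ.varStep^[k] (g i) = g (k + i) :=
      fun k => (iterate_add_apply _ _ _ _).symm
    refine hσ (hasCircularSubset_of_isPeriodicPt (n := j - i) (by omega) (hdom i (by omega))
      ?_ fun k hk => ?_)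
    · rw [IsPeriodicPt, IsFixedPt, hshift, Nat.sub_add_cancel hlt.le, hg]
    · rw [hshift, hshift, hstep _ (by omega), Nat.add_right_comm]

end Subst

section Presentation

open HTerm

variable {Sig : Type} {ar : Sig → ℕ} {Vr : Type}

/-- The relations of the shape "equal modulo a syntactic equality theory" (see `Entails`). -/
structure IsSyntacticEquiv (E : HTerm Sig ar Vr → HTerm Sig ar Vr → Prop) : Prop where
  equivalence : Equivalence E
  head_eq : ∀ {f g ss ts}, E (app f ss) (app g ts) → f = g
  arg : ∀ {f ss ts}, E (app f ss) (app f ts) → ∀ i, E (ss i) (ts i)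

/-- What satisfiability of `σ` in `T` yields for the equality `Entails T σ`. -/
structure Subst.Presents (E : HTerm Sig ar Vr → HTerm Sig ar Vr → Prop)
    (σ : Subst Sig ar Vr) : Prop where
  iterApp : ∀ k t, E (σ.iterApp k t) t
  not_var_app : ∀ {v}, v ∉ σ.dom → ∀ f ts, ¬ E (var v) (app f ts)
  var_inj : ∀ {u₁ u₂}, u₁ ∉ σ.dom → u₂ ∉ σ.dom →
    E (var u₁) (var u₂) → u₁ = u₂

namespace Subst

variable {E : HTerm Sig ar Vr → HTerm Sig ar Vr → Prop} {σ τ : Subst Sig ar Vr}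

theorem exists_mem_vars_iterApp_of_rel (hE : IsSyntacticEquiv E) (hσ : σ.Presents E)
    (hτ : τ.Presents E) (hτR : τ.IsRSubst) {v : Vr} (hv : v ∉ σ.dom) {s t : HTerm Sig ar Vr}
    (hst : E s t) (hvs : v ∈ s.vars) :
    ∃ u ∉ τ.dom, u ∈ (τ.iterApp τ.nb t).vars ∧ E (var u) (var v) := by
  obtain ⟨-, hsymm, htrans⟩ := hE.equivalence
  induction s generalizing t with
  | var x =>
    obtain rfl := mem_vars_var.mp hvs
    have hn := htrans hst (hsymm (hτ.iterApp τ.nb t))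
    cases hτt : τ.iterApp τ.nb t with
    | var w =>
      exact ⟨w, notMem_dom_of_iterApp_nb_eq_var hτR hτt, by simp, hsymm (hτt ▸ hn)⟩
    | app g ts => exact absurd (hτt ▸ hn) (hσ.not_var_app hv g ts)
  | app f ss ih =>
    have hn := htrans hst (hsymm (hτ.iterApp τ.nb t))
    cases hτt : τ.iterApp τ.nb t with
    | var w =>
      exact absurd (hsymm (hτt ▸ hn))
        (hτ.not_var_app (notMem_dom_of_iterApp_nb_eq_var hτR hτt) f ss)
    | app g ts =>
      rw [hτt] at hn
      obtain rfl := hE.head_eq hn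
      obtain ⟨i, hi⟩ := mem_vars_app.mp hvs
      obtain ⟨u, hu, hmem, huv⟩ := ih i (hE.arg hn i) hi
      rw [← hτt]
      refine ⟨u, hu, mem_vars_iterApp_nb hu (k := τ.nb + τ.nb) ?_, huv⟩
      rw [iterApp_add, hτt, iterApp_app]
      exact mem_vars_app.mpr ⟨i, hmem⟩

theorem two_le_count_iterApp_of_rel (hE : IsSyntacticEquiv E) (hσ : σ.Presents E)
    (hτ : τ.Presents E) (hτR : τ.IsRSubst) {v u : Vr} (hv : v ∉ σ.dom) (hu : u ∉ τ.dom)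
    (huv : E (var u) (var v)) {s t : HTerm Sig ar Vr} (hst : E s t) (h2 : 2 ≤ s.count v) :
    2 ≤ (τ.iterApp (2 * τ.nb) t).count u := by
  obtain ⟨-, hsymm, htrans⟩ := hE.equivalence
  induction s generalizing t with
  | var x => exact absurd h2 (by have := count_var_le_one (Sig := Sig) (ar := ar) x v; omega)
  | app f ss ih =>
    have hn := htrans hst (hsymm (hτ.iterApp τ.nb t))
    cases hτt : τ.iterApp τ.nb t with
    | var w =>
      exact absurd (hsymm (hτt ▸ hn))
        (hτ.not_var_app (notMem_dom_of_iterApp_nb_eq_var hτR hτt) f ss)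
    | app g ts =>
      rw [hτt] at hn
      obtain rfl := hE.head_eq hn
      rcases Fintype.exists_two_le_or_exists_ne_of_two_le_sum _ h2 with
        ⟨i, hi⟩ | ⟨i, j, hij, hi, hj⟩
      · refine two_le_count_iterApp_two_mul_nb hu (k := 2 * τ.nb + τ.nb) ?_
        rw [iterApp_add, hτt, iterApp_app]
        exact (ih i (hE.arg hn i) hi).trans
          (count_le_count_app (fun k => τ.iterApp (2 * τ.nb) (ts k)) i u)
      · have hocc : ∀ k, 0 < (ss k).count v → 0 < (τ.iterApp τ.nb (ts k)).count u := by
          intro k hk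
          obtain ⟨u', hu', hmem, hu'v⟩ :=
            exists_mem_vars_iterApp_of_rel hE hσ hτ hτR hv (hE.arg hn k) (count_pos_iff.mp hk)
          obtain rfl := hτ.var_inj hu' hu (htrans hu'v (hsymm huv))
          exact count_pos_iff.mpr hmem
        rw [two_mul, iterApp_add, hτt, iterApp_app]
        have := count_add_count_le_count_app (fun k => τ.iterApp τ.nb (ts k)) hij u
        have := hocc i hi
        have := hocc j hj
        omega

theorem occ_subset_occ (hE : IsSyntacticEquiv E) (hσ : σ.Presents E) (hτ : τ.Presents E)
    (hτR : τ.IsRSubst) {v u : Vr} (hv : v ∉ σ.dom) (hu : u ∉ τ.dom)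
    (huv : E (var u) (var v)) : σ.occ v ⊆ τ.occ u := by
  rintro y ⟨hvy, -⟩
  obtain ⟨u', hu', hmem, hu'v⟩ :=
    exists_mem_vars_iterApp_of_rel hE hσ hτ hτR hv (hσ.iterApp σ.nb (var y)) hvy
  obtain rfl := hτ.var_inj hu' hu (hE.equivalence.trans hu'v (hE.equivalence.symm huv))
  exact ⟨hmem, hu'⟩

theorem occ_eq_empty_of_mem_dom {v : Vr} (hv : v ∈ σ.dom) : σ.occ v = ∅ :=
  Set.eq_empty_of_forall_notMem fun _ hy => hy.2 hv

theorem mem_occ_self {v : Vr} (hv : v ∉ σ.dom) : v ∈ σ.occ v :=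
  ⟨by simp [iterApp_var_of_notMem_dom hv], hv⟩

theorem occ_eq_empty_or_exists_occ_eq (hE : IsSyntacticEquiv E) (hσ : σ.Presents E)
    (hτ : τ.Presents E) (hσR : σ.IsRSubst) (hτR : τ.IsRSubst) (v : Vr) :
    σ.occ v = ∅ ∨ ∃ u, τ.occ u = σ.occ v := by
  by_cases hv : v ∈ σ.dom
  · exact Or.inl (occ_eq_empty_of_mem_dom hv)
  obtain ⟨u, hu, -, huv⟩ :=
    exists_mem_vars_iterApp_of_rel hE hσ hτ hτR hv (hE.equivalence.refl (var v)) (by simp)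
  exact Or.inr ⟨u, (occ_subset_occ hE hτ hσ hσR hu hv (hE.equivalence.symm huv)).antisymm
    (occ_subset_occ hE hσ hτ hτR hv hu huv)⟩

theorem ssets_subset_ssets (h : ∀ v, σ.occ v = ∅ ∨ ∃ u, τ.occ u = σ.occ v)
    (VI : Set Vr) : σ.ssets VI ⊆ τ.ssets VI := by
  rintro g ⟨⟨v, rfl⟩, hne⟩
  rcases h v with h0 | ⟨u, hu⟩
  · exact absurd (by simp [h0]) hne
  · exact ⟨⟨u, by rw [hu]⟩, hne⟩

theorem gvars_subset_gvars (h : ∀ u, τ.occ u = ∅ ∨ ∃ v, σ.occ v = τ.occ u) :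
    σ.gvars ⊆ τ.gvars := by
  rintro y ⟨-, hy⟩
  have hnot : ∀ u, y ∉ τ.occ u := fun u => by
    rcases h u with h0 | ⟨v, hv⟩
    · simp [h0]
    · exact hv ▸ hy v
  exact ⟨by by_contra hyd; exact hnot y (mem_occ_self hyd), hnot⟩

theorem fvars_subset_fvars (hE : IsSyntacticEquiv E) (hσ : σ.Presents E) (hτ : τ.Presents E)
    (hσR : σ.IsRSubst) : σ.fvars ⊆ τ.fvars := by
  rintro y ⟨z, hz⟩
  cases hτy : τ.iterApp τ.nb (var y) with
  | var w => exact ⟨w, hτy⟩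
  | app g ts =>
    have hzy : E (var z) (var y) := hz ▸ hσ.iterApp σ.nb (var y)
    have hyg : E (var y) (app g ts) := hτy ▸ hE.equivalence.symm (hτ.iterApp τ.nb (var y))
    exact absurd (hE.equivalence.trans hzy hyg)
      (hσ.not_var_app (notMem_dom_of_iterApp_nb_eq_var hσR hz) g ts)

theorem lvars_subset_lvars (hE : IsSyntacticEquiv E) (hσ : σ.Presents E) (hτ : τ.Presents E)
    (hσR : σ.IsRSubst) : σ.lvars ⊆ τ.lvars := by
  intro y hy z hz hzd
  have hpos : 0 < (τ.iterApp (2 * τ.nb) (var y)).count z :=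
    (count_pos_iff.mpr hz).trans_le (count_iterApp_mono hzd _ (by omega))
  obtain ⟨w, hw, -, hwz⟩ :=
    exists_mem_vars_iterApp_of_rel hE hτ hσ hσR hzd (hE.equivalence.refl (var z)) (by simp)
  have hwy : w ∈ (σ.iterApp σ.nb (var y)).vars :=
    (occ_subset_occ hE hτ hσ hσR hzd hw hwz ⟨hz, hzd⟩).1
  by_contra hne
  have h2 := two_le_count_iterApp_of_rel hE hτ hσ hσR hzd hw hwz
    (hτ.iterApp (2 * τ.nb) (var y)) (by omega)
  have := hy w hwy hw
  omega

theorem ssets_gvars_fvars_lvars_eq_of_presents (hE : IsSyntacticEquiv E) (hσ : σ.Presents E)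
    (hτ : τ.Presents E) (hσR : σ.IsRSubst) (hτR : τ.IsRSubst) (VI : Set Vr) :
    σ.ssets VI = τ.ssets VI ∧ σ.gvars = τ.gvars ∧ σ.fvars = τ.fvars ∧
      σ.lvars = τ.lvars := by
  have hστ := occ_eq_empty_or_exists_occ_eq hE hσ hτ hσR hτR
  have hτσ := occ_eq_empty_or_exists_occ_eq hE hτ hσ hτR hσR
  exact ⟨(ssets_subset_ssets hστ VI).antisymm (ssets_subset_ssets hτσ VI),
    (gvars_subset_gvars hτσ).antisymm (gvars_subset_gvars hστ),
    (fvars_subset_fvars hE hσ hτ hσR).antisymm (fvars_subset_fvars hE hτ hσ hτR),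
    (lvars_subset_lvars hE hσ hτ hσR).antisymm (lvars_subset_lvars hE hτ hσ hτR)⟩

end Subst

/-- `T ⊢ ∀ (σ → s = t)`, semantically. -/
def Entails (T : Set (Interp Sig ar)) (σ : Subst Sig ar Vr) (s t : HTerm Sig ar Vr) : Prop :=
  ∀ M ∈ T, ∀ ν : Vr → M.carrier, M.SatEqs ν (eqsOf σ) → M.eval ν s = M.eval ν t

namespace Interp

variable {M : Interp Sig ar} {ν : Vr → M.carrier} {σ : Subst Sig ar Vr}

theorem eval_substApp_toFun (hν : M.SatEqs ν (eqsOf σ)) (t : HTerm Sig ar Vr) :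
    M.eval ν (t.substApp σ.toFun) = M.eval ν t := by
  induction t with
  | var x =>
    by_cases hx : x ∈ σ.dom
    · exact (hν (var x, σ.toFun x) ⟨x, hx, rfl⟩).symm
    · exact congrArg (M.eval ν) (Subst.notMem_dom_iff.mp hx)
  | app f ts ih => exact congrArg (M.interp f) (funext ih)

theorem eval_iterApp (hν : M.SatEqs ν (eqsOf σ)) (k : ℕ) (t : HTerm Sig ar Vr) :
    M.eval ν (σ.iterApp k t) = M.eval ν t := by
  induction k with
  | zero => rfl
  | succ k ih => rw [Subst.iterApp_succ', eval_substApp_toFun hν, ih]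

theorem SatisfiesIdentity.eq_of_interp_eq (hM : M.SatisfiesIdentity) {f g : Sig}
    {xs : Fin (ar f) → M.carrier} {ys : Fin (ar g) → M.carrier}
    (h : M.interp f xs = M.interp g ys) : f = g :=
  by_contra fun hne => hM.2 f g xs ys hne h

end Interp

variable {T : Set (Interp Sig ar)} {σ τ : Subst Sig ar Vr}

theorem isSyntacticEquiv_entails (hT : IsSyntacticTheory T) (hc : ∃ a : Sig, ar a = 0)
    (hsat : SatisfiableIn T σ) : IsSyntacticEquiv (Entails T σ) where
  equivalence :=
    ⟨fun _ _ _ _ _ => rfl, fun h M hM ν hν => (h M hM ν hν).symm,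
      fun h₁ h₂ M hM ν hν => (h₁ M hM ν hν).trans (h₂ M hM ν hν)⟩
  head_eq h := by
    obtain ⟨M, hM⟩ := hT.1
    obtain ⟨a, ha⟩ := hc
    obtain ⟨ν, -, hν⟩ := hsat M hM fun _ => M.interp a fun i => (i.cast ha).elim0
    exact (hT.2 M hM).eq_of_interp_eq (h M hM ν hν)
  arg h i M hM ν hν := congrFun ((hT.2 M hM).1 _ _ _ (h M hM ν hν)) i

theorem presents_entails (hT : IsSyntacticTheory T) (hSig : ∃ a b : Sig, a ≠ b ∧ ar a = 0)
    (hsat : SatisfiableIn T σ) : σ.Presents (Entails T σ) := by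
  obtain ⟨M, hM⟩ := hT.1
  obtain ⟨a, b, hab, ha⟩ := hSig
  set A := M.interp a fun i => (i.cast ha).elim0
  refine ⟨fun k t M _ ν hν => Interp.eval_iterApp hν k t, fun {v} hv f ts h => ?_,
    fun {u₁ u₂} hu₁ hu₂ h => ?_⟩
  · -- a free `v` can be given the value `c xs` for any head `c`, which would force `f = c`
    have hf : ∀ c xs, f = c := fun c xs => by
      obtain ⟨ν, hνv, hν⟩ := hsat M hM fun _ => M.interp c xs
      exact (hT.2 M hM).eq_of_interp_eq ((h M hM ν hν).symm.trans (hνv v hv))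
    exact hab ((hf a fun i => (i.cast ha).elim0).symm.trans (hf b fun _ => A))
  · by_contra hne
    obtain ⟨ν, hνu, hν⟩ := hsat M hM fun x => if x = u₁ then A else M.interp b fun _ => A
    have hAB := (hνu u₁ hu₁).symm.trans ((h M hM ν hν).trans (hνu u₂ hu₂))
    simp only [if_neg (Ne.symm hne)] at hAB
    exact hab ((hT.2 M hM).eq_of_interp_eq hAB)

theorem EquivIn.entails_eq (h : EquivIn T σ τ) : Entails T σ = Entails T τ := by
  funext s t
  exact propext <| forall₂_congr fun M hM => forall_congr' fun ν => by rw [h M hM ν]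

end Presentation

theorem ssets_gvars_fvars_lvars_eq_of_equiv_general
    {Sig Vr : Type} {ar : Sig → ℕ}
    (_hSig : ∃ a b : Sig, a ≠ b ∧ ar a = 0)
    (VI : Set Vr)
    (T : Set (Interp Sig ar)) (_hT : IsSyntacticTheory T)
    (σ τ : Subst Sig ar Vr) (_hσ : σ.IsRSubst) (_hτ : τ.IsRSubst)
    (_hsatσ : SatisfiableIn T σ) (_hsatτ : SatisfiableIn T τ)
    (_hequiv : EquivIn T σ τ) :
    σ.ssets VI = τ.ssets VI ∧ σ.gvars = τ.gvars ∧ σ.fvars = τ.fvars ∧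
      σ.lvars = τ.lvars := by
  have hE := isSyntacticEquiv_entails _hT (_hSig.imp fun _ ⟨_, _, ha⟩ => ha) _hsatσ
  have hσE := presents_entails _hT _hSig _hsatσ
  have hτE : τ.Presents (Entails T σ) :=
    _hequiv.entails_eq ▸ presents_entails _hT _hSig _hsatτ
  exact Subst.ssets_gvars_fvars_lvars_eq_of_presents hE hσE hτE _hσ _hτ VI

/-- Let `T` be a syntactic equality theory and `σ, τ ∈ RSubst`
both satisfiable in `T`, with `T ⊢ ∀(σ ↔ τ)`. Then `ssets(σ) = ssets(τ)`,
`gvars(σ) = gvars(τ)`, `fvars(σ) = fvars(τ)` and `lvars(σ) = lvars(τ)`. -/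
theorem ssets_gvars_fvars_lvars_eq_of_equiv
    {Sig Vr : Type} {ar : Sig → ℕ} [Denumerable Vr]
    (_hSig : ∃ a b : Sig, a ≠ b ∧ ar a = 0)
    (VI : Set Vr) (_hVI : VI.Finite)
    (T : Set (Interp Sig ar)) (_hT : IsSyntacticTheory T)
    (σ τ : Subst Sig ar Vr) (_hσ : σ.IsRSubst) (_hτ : τ.IsRSubst)
    (_hsatσ : SatisfiableIn T σ) (_hsatτ : SatisfiableIn T τ)
    (_hequiv : EquivIn T σ τ) :
    σ.ssets VI = τ.ssets VI ∧ σ.gvars = τ.gvars ∧ σ.fvars = τ.fvars ∧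
      σ.lvars = τ.lvars :=
  ssets_gvars_fvars_lvars_eq_of_equiv_general _hSig VI T _hT σ τ _hσ _hτ _hsatσ _hsatτ _hequiv
end
end

section
/- Let d ∈ SFL and κ ∈ ASub_⊥ be such that α_ASub(d) ⪯ κ, and let (x ↦ t) be a binding with {x} ∪ vars(t) ⊆ VI. Then α_ASub(amgu_S(d, x ↦ t)) ⪯ amgu_ASub(κ, x ↦ t), where amgu_S is taken relative to the rational-tree equality theory (so the occurs-check bottom case does not apply). That is, the abstract unification on SFL is uniformly more precise than the abstract unification on the pair-sharing domain ASub. -/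
open Classical

noncomputable section

/-- The set `SG` of sharing groups over `VI`: nonempty subsets of `VI`. -/
def SG {Vr : Type} (VI : Set Vr) : Set (Set Vr) := {S | S ⊆ VI ∧ S ≠ ∅}

/-- An element of the abstract domain `SFL`: a set-sharing component together
with a freeness and a linearity component. -/
structure SFLElem (Vr : Type) where
  sh : Set (Set Vr)
  f : Set Vr
  l : Set Vr

/-- Well-formedness of an `SFL` element: `sh ∈ SH = ℘(SG VI)`, `f ⊆ VI`, `l ⊆ VI`. -/
def SFLElem.WF {Vr : Type} (VI : Set Vr) (d : SFLElem Vr) : Prop :=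
  d.sh ⊆ SG VI ∧ d.f ⊆ VI ∧ d.l ⊆ VI

/-- The bottom element `⊥_S = ⟨∅, VI, VI⟩` of `SFL`. -/
def botS {Vr : Type} (VI : Set Vr) : SFLElem Vr := ⟨∅, VI, VI⟩

/-- The order of `SFL`: `⊆` on the sharing component, `⊇` on freeness and linearity. -/
def SFLElem.leS {Vr : Type} (d1 d2 : SFLElem Vr) : Prop :=
  d1.sh ⊆ d2.sh ∧ d2.f ⊆ d1.f ∧ d2.l ⊆ d1.l

/-- The least upper bound of `SFL`. -/
def SFLElem.lubS {Vr : Type} (d1 d2 : SFLElem Vr) : SFLElem Vr :=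
  ⟨d1.sh ∪ d2.sh, d1.f ∩ d2.f, d1.l ∩ d2.l⟩

section SHOps

variable {Vr : Type}

/-- The relevant component of `sh` with respect to `V`. -/
def relSH (V : Set Vr) (sh : Set (Set Vr)) : Set (Set Vr) :=
  {S | S ∈ sh ∧ S ∩ V ≠ ∅}

/-- The irrelevant component of `sh` with respect to `V`. -/
def nrelSH (V : Set Vr) (sh : Set (Set Vr)) : Set (Set Vr) := sh \ relSH V sh

/-- The binary union function on sharing sets. -/
def binSH (sh1 sh2 : Set (Set Vr)) : Set (Set Vr) :=
  {S | ∃ S1 ∈ sh1, ∃ S2 ∈ sh2, S = S1 ∪ S2}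

/-- The star-union of a sharing set: all sharing groups that are unions of
finitely many (at least one) elements of `sh`. -/
def starSH (VI : Set Vr) (sh : Set (Set Vr)) : Set (Set Vr) :=
  {S | S ∈ SG VI ∧ ∃ F : Set (Set Vr), F.Finite ∧ F.Nonempty ∧ F ⊆ sh ∧ S = ⋃₀ F}

/-- The redundancy-removing upper closure operator `ρ_PSD` on sharing sets. -/
def rhoPSDsh (VI : Set Vr) (sh : Set (Set Vr)) : Set (Set Vr) :=
  {S | S ∈ SG VI ∧ ∀ y ∈ S, S = ⋃₀ {U | U ∈ sh ∧ y ∈ U ∧ U ⊆ S}}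

/-- `ρ_PSD` on `SFL`: it acts on the sharing component only. -/
def rhoPSD (VI : Set Vr) (d : SFLElem Vr) : SFLElem Vr :=
  ⟨rhoPSDsh VI d.sh, d.f, d.l⟩

end SHOps

/-- The `cyclic` operator, strengthening `sh` by coupling `x` with `t`. -/
def cyclicSH {Sig : Type} {ar : Sig → ℕ} {Vr : Type} (x : Vr) (t : HTerm Sig ar Vr)
    (sh : Set (Set Vr)) : Set (Set Vr) :=
  nrelSH ({x} ∪ t.vars) sh ∪ relSH (t.vars \ {x}) sh

section Predicates

variable {Sig : Type} {ar : Sig → ℕ} {Vr : Type}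

/-- `t` is ground in `d`. -/
def groundD (VI : Set Vr) (d : SFLElem Vr) (t : HTerm Sig ar Vr) : Prop :=
  t.vars ⊆ VI \ ⋃₀ d.sh

/-- `s` and `t` are independent in `d`. -/
def indD (d : SFLElem Vr) (s t : HTerm Sig ar Vr) : Prop :=
  relSH s.vars d.sh ∩ relSH t.vars d.sh = ∅

/-- `t` is free in `d` (it is a variable belonging to the freeness component). -/
def freeD (d : SFLElem Vr) (t : HTerm Sig ar Vr) : Prop :=
  ∃ y ∈ d.f, t = HTerm.var y

/-- `y` occurs linearly in `t` in `d`. -/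
def occlinD (VI : Set Vr) (d : SFLElem Vr) (y : Vr) (t : HTerm Sig ar Vr) : Prop :=
  groundD VI d (HTerm.var y : HTerm Sig ar Vr) ∨
    (t.count y = 1 ∧ y ∈ d.l ∧
      ∀ z ∈ t.vars, y ≠ z → indD d (HTerm.var y : HTerm Sig ar Vr) (HTerm.var z))

/-- `t` is linear in `d`. -/
def linD (VI : Set Vr) (d : SFLElem Vr) (t : HTerm Sig ar Vr) : Prop :=
  ∀ y ∈ t.vars, occlinD VI d y t

/-- The set of variables of interest that may share with `t` in `d`. -/
def shareWith (d : SFLElem Vr) (t : HTerm Sig ar Vr) : Set Vr :=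
  ⋃₀ relSH t.vars d.sh

end Predicates

section Amgu

variable {Sig : Type} {ar : Sig → ℕ} {Vr : Type}

/-- The core of the abstract mgu operator (the non-bottom case of `amgu_S`). -/
def amguCore (VI : Set Vr) (d : SFLElem Vr) (x : Vr) (t : HTerm Sig ar Vr) :
    SFLElem Vr :=
  let sh := d.sh
  let shx := relSH {x} sh
  let sht := relSH t.vars sh
  let shxt := shx ∩ sht
  let shm := nrelSH ({x} ∪ t.vars) sh
  let sh'' : Set (Set Vr) :=
    if freeD d (HTerm.var x : HTerm Sig ar Vr) ∨ freeD d t then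
      binSH shx sht
    else if linD VI d (HTerm.var x : HTerm Sig ar Vr) ∧ linD VI d t then
      binSH (shx ∪ binSH shx (starSH VI shxt)) (sht ∪ binSH sht (starSH VI shxt))
    else if linD VI d (HTerm.var x : HTerm Sig ar Vr) then
      binSH (starSH VI shx) sht
    else if linD VI d t then
      binSH shx (starSH VI sht)
    else
      binSH (starSH VI shx) (starSH VI sht)
  let sh' := cyclicSH x t (shm ∪ sh'')
  let Sx := shareWith d (HTerm.var x : HTerm Sig ar Vr)
  let St := shareWith d t
  let f' : Set Vr :=
    if freeD d (HTerm.var x : HTerm Sig ar Vr) ∧ freeD d t then d.f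
    else if freeD d (HTerm.var x : HTerm Sig ar Vr) then d.f \ Sx
    else if freeD d t then d.f \ St
    else d.f \ (Sx ∪ St)
  let l'' : Set Vr :=
    if linD VI d (HTerm.var x : HTerm Sig ar Vr) ∧ linD VI d t then d.l \ (Sx ∩ St)
    else if linD VI d (HTerm.var x : HTerm Sig ar Vr) then d.l \ Sx
    else if linD VI d t then d.l \ St
    else d.l \ (Sx ∪ St)
  let l' := (VI \ ⋃₀ sh') ∪ f' ∪ l''
  ⟨sh', f', l'⟩

/-- The abstract mgu operator `amgu_S`, relative to the rational-tree equality
theory (no occurs-check bottom case). -/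
def amguRT (VI : Set Vr) (d : SFLElem Vr) (x : Vr) (t : HTerm Sig ar Vr) :
    SFLElem Vr :=
  if d = botS VI then botS VI else amguCore VI d x t

/-- The abstract unification operator `aunify_S` (rational-tree case),
applying `amgu_S` along a sequence of bindings. -/
def aunifyRT (VI : Set Vr) (d : SFLElem Vr) :
    List (Vr × HTerm Sig ar Vr) → SFLElem Vr
  | [] => d
  | b :: bs => aunifyRT VI (amguRT VI d b.1 b.2) bs

end Amgu

/-- A (non-bottom) element of the `ASub` domain: definitely-ground variables
together with a pair-sharing/non-linearity relation encoded as sharing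
groups of cardinality 1 or 2. -/
structure ASubElem (Vr : Type) where
  G : Set Vr
  R : Set (Set Vr)

/-- Well-formedness of an `ASub` element. -/
def ASubElem.WF {Vr : Type} (VI : Set Vr) (κ : ASubElem Vr) : Prop :=
  κ.G ⊆ VI ∧ κ.G ∩ ⋃₀ κ.R = ∅ ∧
  ∀ S ∈ κ.R, S ⊆ VI ∧ 1 ≤ S.ncard ∧ S.ncard ≤ 2

/-- The order on `ASub_⊥` (`none` is the bottom element `⊥_ASub`). -/
def asubLE {Vr : Type} : Option (ASubElem Vr) → Option (ASubElem Vr) → Prop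
  | none, _ => True
  | some _, none => False
  | some κ1, some κ2 => κ2.G ⊆ κ1.G ∧ κ1.R ⊆ κ2.R

/-- The abstraction `α_ASub : SFL → ASub_⊥`. -/
def alphaASub {Vr : Type} (VI : Set Vr) (d : SFLElem Vr) : Option (ASubElem Vr) :=
  if d = botS VI then none
  else some
    ⟨VI \ ⋃₀ d.sh,
     {S | ∃ x, x ∈ VI ∧ x ∈ ⋃₀ d.sh ∧ x ∉ d.l ∧ S = {x}} ∪
     {S | ∃ x y, x ∈ VI ∧ y ∈ VI ∧ x ≠ y ∧ (∃ U ∈ d.sh, x ∈ U ∧ y ∈ U) ∧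
            S = {x, y}}⟩

section ASubOps

variable {Sig : Type} {ar : Sig → ℕ} {Vr : Type}

/-- `y` occurs linearly in `t` in the abstract substitution `κ`. -/
def occlinK (κ : ASubElem Vr) (y : Vr) (t : HTerm Sig ar Vr) : Prop :=
  y ∈ κ.G ∨ (t.count y = 1 ∧ ∀ z ∈ t.vars, ({y, z} : Set Vr) ∉ κ.R)

/-- The abstract multiplicity `χ_κ(t) ∈ {0, 1, 2}` of a term. -/
def chiT (κ : ASubElem Vr) (t : HTerm Sig ar Vr) : ℕ :=
  if t.vars ⊆ κ.G then 0
  else if ∀ y ∈ t.vars, occlinK κ y t then 1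
  else 2

/-- `bin(V, W) = {{v,w} ⊆ VI | v ∈ V, w ∈ W}`. -/
def binPair (VI V W : Set Vr) : Set (Set Vr) :=
  {S | ∃ v ∈ V, ∃ w ∈ W, S = ({v, w} : Set Vr) ∧ S ⊆ VI}

/-- The sharing caused by an abstract equation (`soln`). -/
def solnA (VI : Set Vr) (κ : ASubElem Vr) (x : Vr) (t : HTerm Sig ar Vr) :
    ASubElem Vr :=
  let Vx : Set Vr := {x}
  let Vt := t.vars
  let cx := chiT κ (HTerm.var x : HTerm Sig ar Vr)
  let ct := chiT κ t
  if cx = 0 ∨ ct = 0 then ⟨Vx ∪ Vt, ∅⟩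
  else if cx = 1 ∧ ct = 1 then ⟨∅, binPair VI Vx Vt⟩
  else if cx = 1 then ⟨∅, binPair VI Vx (Vx ∪ Vt)⟩
  else if ct = 1 then ⟨∅, binPair VI (Vx ∪ Vt) Vt⟩
  else ⟨∅, binPair VI (Vx ∪ Vt) (Vx ∪ Vt)⟩

/-- Abstract composition of abstract substitutions. -/
def compA (VI : Set Vr) (κ κ' : ASubElem Vr) : ASubElem Vr :=
  ⟨κ.G ∪ κ'.G,
   {S | ∃ u v : Vr, S = ({u, v} : Set Vr) ∧ S ⊆ VI ∧ S ∩ (κ.G ∪ κ'.G) = ∅ ∧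
      (({u, v} : Set Vr) ∈ κ.R ∨
        ∃ x y : Vr, (u = x ∨ ({u, x} : Set Vr) ∈ κ.R) ∧ ({x, y} : Set Vr) ∈ κ'.R ∧
          (y = v ∨ ({y, v} : Set Vr) ∈ κ.R))}⟩

/-- The abstract mgu operator on `ASub_⊥`. -/
def amguASub (VI : Set Vr) :
    Option (ASubElem Vr) → Vr → HTerm Sig ar Vr → Option (ASubElem Vr)
  | none, _, _ => none
  | some κ, x, t => some (compA VI κ (solnA VI κ x t))

end ASubOps


/-!
Outside the ground case every group of the new sharing component is an old group avoiding
`{x} ∪ vars t` or a union of old groups, each containing `x` or meeting `vars t`, and the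
freeness/linearity case split of `amgu_S` ensures that any two distinct ones among these old
groups contain the two ends of some pair recorded by `soln`: a side that is not linear in `d` has `χ_κ = 2`, which
makes `soln` record pairs within that side. As `κ` records every pair inside an old group, a new
pair `{u, v}` is reached in `κ ∘ soln` by walking from `u` to one end of such a `soln`-pair
and from the other end to `v`. Linearity is lost only by variables sharing with `x` or `t` on
such a side, so the same walk covers the non-linear singletons. In the ground case `amgu_S` only
discards the groups meeting `{x} ∪ vars t`, all of which `soln` makes ground.
-/

section

variable {Sig : Type} {ar : Sig → ℕ} {Vr : Type}

@[simp]
lemma binSH_empty_left (B : Set (Set Vr)) : binSH ∅ B = ∅ := by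
  ext S; simp [binSH]

@[simp]
lemma binSH_empty_right (A : Set (Set Vr)) : binSH A ∅ = ∅ := by
  ext S; simp [binSH]

@[simp]
lemma starSH_empty (VI : Set Vr) : starSH VI ∅ = ∅ :=
  Set.eq_empty_iff_forall_notMem.2 fun _ ⟨_, _, _, ⟨_, hU⟩, hF, _⟩ => hF hU

lemma relSH_subset (V : Set Vr) (sh : Set (Set Vr)) : relSH V sh ⊆ sh := fun _ h => h.1

lemma exists_mem_inter_of_mem_relSH {V : Set Vr} {sh : Set (Set Vr)} {U : Set Vr}
    (h : U ∈ relSH V sh) : ∃ a ∈ U, a ∈ V := by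
  obtain ⟨a, haU, haV⟩ := Set.nonempty_iff_ne_empty.2 h.2
  exact ⟨a, haU, haV⟩

lemma mem_of_mem_relSH_singleton {a : Vr} {sh : Set (Set Vr)} {U : Set Vr}
    (h : U ∈ relSH {a} sh) : a ∈ U := by
  obtain ⟨_, hU, rfl⟩ := exists_mem_inter_of_mem_relSH h
  exact hU

lemma notMem_of_mem_nrelSH {V : Set Vr} {sh : Set (Set Vr)} {U : Set Vr}
    (h : U ∈ nrelSH V sh) {a : Vr} (ha : a ∈ U) : a ∉ V :=
  fun haV => h.2 ⟨h.1, Set.nonempty_iff_ne_empty.1 ⟨a, ha, haV⟩⟩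

lemma cyclicSH_subset (x : Vr) (t : HTerm Sig ar Vr) (sh : Set (Set Vr)) :
    cyclicSH x t sh ⊆ sh := by
  rintro S (h | h)
  · exact h.1
  · exact h.1

lemma exists_sUnion_insert_of_mem {VI : Set Vr} {A B : Set (Set Vr)} {S : Set Vr}
    (h : S ∈ A ∪ binSH A (starSH VI B)) : ∃ U ∈ A, ∃ F ⊆ B, S = ⋃₀ insert U F := by
  rcases h with h | ⟨U, hU, _, ⟨-, F, -, -, hF, rfl⟩, rfl⟩
  · exact ⟨S, h, ∅, Set.empty_subset _, by simp⟩
  · exact ⟨U, hU, F, hF, (Set.sUnion_insert U F).symm⟩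

/-- The sharing component `sh''` built by `amgu_S` before `cyclic` is applied. -/
def amguNewSh (VI : Set Vr) (d : SFLElem Vr) (x : Vr) (t : HTerm Sig ar Vr) :
    Set (Set Vr) :=
  let shx := relSH {x} d.sh
  let sht := relSH t.vars d.sh
  let shxt := shx ∩ sht
  if freeD d (HTerm.var x : HTerm Sig ar Vr) ∨ freeD d t then
    binSH shx sht
  else if linD VI d (HTerm.var x : HTerm Sig ar Vr) ∧ linD VI d t then
    binSH (shx ∪ binSH shx (starSH VI shxt)) (sht ∪ binSH sht (starSH VI shxt))
  else if linD VI d (HTerm.var x : HTerm Sig ar Vr) then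
    binSH (starSH VI shx) sht
  else if linD VI d t then
    binSH shx (starSH VI sht)
  else
    binSH (starSH VI shx) (starSH VI sht)

/-- The linearity component `l''` of `amgu_S`. -/
def amguNewLin (VI : Set Vr) (d : SFLElem Vr) (x : Vr) (t : HTerm Sig ar Vr) : Set Vr :=
  let Sx := shareWith d (HTerm.var x : HTerm Sig ar Vr)
  let St := shareWith d t
  if linD VI d (HTerm.var x : HTerm Sig ar Vr) ∧ linD VI d t then d.l \ (Sx ∩ St)
  else if linD VI d (HTerm.var x : HTerm Sig ar Vr) then d.l \ Sx
  else if linD VI d t then d.l \ St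
  else d.l \ (Sx ∪ St)

lemma amguCore_sh_subset (VI : Set Vr) (d : SFLElem Vr) (x : Vr) (t : HTerm Sig ar Vr) :
    (amguCore VI d x t).sh ⊆ nrelSH ({x} ∪ t.vars) d.sh ∪ amguNewSh VI d x t :=
  cyclicSH_subset x t _

lemma amguNewLin_subset_amguCore_l (VI : Set Vr) (d : SFLElem Vr) (x : Vr)
    (t : HTerm Sig ar Vr) : amguNewLin VI d x t ⊆ (amguCore VI d x t).l :=
  Set.subset_union_right

lemma relSH_eq_empty_of_groundD {VI : Set Vr} {d : SFLElem Vr} {s : HTerm Sig ar Vr}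
    (h : groundD VI d s) : relSH s.vars d.sh = ∅ :=
  Set.eq_empty_iff_forall_notMem.2 fun U hU =>
    let ⟨_, haU, has⟩ := exists_mem_inter_of_mem_relSH hU
    (h has).2 ⟨U, hU.1, haU⟩

lemma linD_of_groundD {VI : Set Vr} {d : SFLElem Vr} {s : HTerm Sig ar Vr}
    (h : groundD VI d s) : linD VI d s :=
  fun _ hy => Or.inl (Set.singleton_subset_iff.2 (h hy))

lemma amguNewSh_eq_empty_of_groundD {VI : Set Vr} {d : SFLElem Vr} {x : Vr}
    {t : HTerm Sig ar Vr}
    (h : groundD VI d (HTerm.var x : HTerm Sig ar Vr) ∨ groundD VI d t) :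
    amguNewSh VI d x t = ∅ := by
  rcases h with h | h <;> have h0 := relSH_eq_empty_of_groundD h <;>
    simp only [amguNewSh, HTerm.vars] at h0 ⊢ <;> split_ifs <;> simp [h0]

lemma subset_amguNewLin_of_groundD {VI : Set Vr} {d : SFLElem Vr} {x : Vr}
    {t : HTerm Sig ar Vr}
    (h : groundD VI d (HTerm.var x : HTerm Sig ar Vr) ∨ groundD VI d t) :
    d.l ⊆ amguNewLin VI d x t := by
  rcases h with h | h
  · have h0 : shareWith d (HTerm.var x : HTerm Sig ar Vr) = ∅ := by
      rw [shareWith, relSH_eq_empty_of_groundD h, Set.sUnion_empty]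
    simp only [amguNewLin, h0, linD_of_groundD h, true_and]
    split_ifs <;> simp
  · have h0 : shareWith d t = ∅ := by
      rw [shareWith, relSH_eq_empty_of_groundD h, Set.sUnion_empty]
    simp only [amguNewLin, h0, linD_of_groundD h, and_true]
    split_ifs <;> simp

def Linked (R' : Set (Set Vr)) (U V : Set Vr) : Prop :=
  ∃ a ∈ U, ∃ b ∈ V, ({a, b} : Set Vr) ∈ R'

instance (R' : Set (Set Vr)) : Std.Symm (Linked R') :=
  ⟨fun _ _ ⟨a, ha, b, hb, hab⟩ => ⟨b, hb, a, ha, Set.pair_comm a b ▸ hab⟩⟩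

lemma linked_of_mem_relSH {R' sh : Set (Set Vr)} {V W U U' : Set Vr}
    (hVW : ∀ a ∈ V, ∀ b ∈ W, ({a, b} : Set Vr) ∈ R')
    (hU : U ∈ relSH V sh) (hU' : U' ∈ relSH W sh) : Linked R' U U' :=
  let ⟨a, haU, haV⟩ := exists_mem_inter_of_mem_relSH hU
  let ⟨b, hbU', hbW⟩ := exists_mem_inter_of_mem_relSH hU'
  ⟨a, haU, b, hbU', hVW a haV b hbW⟩

def LinkedCover (R' C : Set (Set Vr)) (T : Set Vr) : Prop :=
  ∃ F ⊆ C, T = ⋃₀ F ∧ F.Pairwise (Linked R')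

namespace LinkedCover

variable {R' C sh : Set (Set Vr)} {V W T S₁ S₂ : Set Vr}

lemma of_mem (h : T ∈ C) : LinkedCover R' C T :=
  ⟨{T}, Set.singleton_subset_iff.2 h, Set.sUnion_singleton T |>.symm,
    Set.pairwise_singleton _ _⟩

lemma of_mem_starSH {VI : Set Vr} (hV : ∀ a ∈ V, ∀ b ∈ V, ({a, b} : Set Vr) ∈ R')
    (h : T ∈ starSH VI (relSH V sh)) : LinkedCover R' (relSH V sh) T := by
  obtain ⟨-, F, -, -, hF, rfl⟩ := h
  exact ⟨F, hF, rfl, fun U hU U' hU' _ => linked_of_mem_relSH hV (hF hU) (hF hU')⟩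

lemma union (hVW : ∀ a ∈ V, ∀ b ∈ W, ({a, b} : Set Vr) ∈ R')
    (h₁ : LinkedCover R' (relSH V sh) S₁) (h₂ : LinkedCover R' (relSH W sh) S₂) :
    LinkedCover R' sh (S₁ ∪ S₂) := by
  obtain ⟨F₁, hF₁, rfl, hp₁⟩ := h₁
  obtain ⟨F₂, hF₂, rfl, hp₂⟩ := h₂
  refine ⟨F₁ ∪ F₂, Set.union_subset (hF₁.trans (relSH_subset V sh))
    (hF₂.trans (relSH_subset W sh)), (Set.sUnion_union F₁ F₂).symm, ?_⟩
  exact Set.pairwise_union_of_symm.2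
    ⟨hp₁, hp₂, fun U hU U' hU' _ => linked_of_mem_relSH hVW (hF₁ hU) (hF₂ hU')⟩

/-- The shape of `sh''` when both `x` and `t` are linear: besides one group relevant to `V`
and one relevant to `W`, only groups relevant to both occur, and these link to everything. -/
lemma of_mem_linear {VI : Set Vr} (hVW : ∀ a ∈ V, ∀ b ∈ W, ({a, b} : Set Vr) ∈ R')
    (h₁ : S₁ ∈ relSH V sh ∪ binSH (relSH V sh) (starSH VI (relSH V sh ∩ relSH W sh)))
    (h₂ : S₂ ∈ relSH W sh ∪ binSH (relSH W sh) (starSH VI (relSH V sh ∩ relSH W sh))) :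
    LinkedCover R' sh (S₁ ∪ S₂) := by
  obtain ⟨U₁, hU₁, F₁, hF₁, rfl⟩ := exists_sUnion_insert_of_mem h₁
  obtain ⟨U₂, hU₂, F₂, hF₂, rfl⟩ := exists_sUnion_insert_of_mem h₂
  have hB : F₁ ∪ F₂ ⊆ relSH V sh ∩ relSH W sh := Set.union_subset hF₁ hF₂
  refine ⟨insert U₁ F₁ ∪ insert U₂ F₂, ?_, (Set.sUnion_union _ _).symm, ?_⟩
  · refine Set.union_subset (Set.insert_subset hU₁.1 ?_) (Set.insert_subset hU₂.1 ?_) <;>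
      intro U hU <;> exact (hB (by simp [hU])).1.1
  refine Set.Pairwise.mono (s := insert U₁ (insert U₂ (F₁ ∪ F₂))) ?_ ?_
  · rintro U ((rfl | hU) | (rfl | hU)) <;> simp [*]
  rw [Set.pairwise_insert_of_symm, Set.pairwise_insert_of_symm]
  refine ⟨⟨fun U hU U' hU' _ => linked_of_mem_relSH hVW (hB hU).1 (hB hU').2,
    fun U hU _ => Std.Symm.symm _ _ (linked_of_mem_relSH hVW (hB hU).1 hU₂)⟩, ?_⟩
  rintro U (rfl | hU) _
  · exact linked_of_mem_relSH hVW hU₁ hU₂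
  · exact linked_of_mem_relSH hVW hU₁ (hB hU).2

end LinkedCover

/-- The pairs `R'` must contain for the groups of `sh''` to be pairwise linked. -/
structure CoversNewSharing (VI : Set Vr) (d : SFLElem Vr) (x : Vr) (t : HTerm Sig ar Vr)
    (R' : Set (Set Vr)) : Prop where
  x_t : ∀ a ∈ ({x} : Set Vr), ∀ b ∈ t.vars, ({a, b} : Set Vr) ∈ R'
  x_x : ¬ linD VI d t → ∀ a ∈ ({x} : Set Vr), ∀ b ∈ ({x} : Set Vr), ({a, b} : Set Vr) ∈ R'
  t_t : ¬ linD VI d (HTerm.var x : HTerm Sig ar Vr) →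
    ∀ a ∈ t.vars, ∀ b ∈ t.vars, ({a, b} : Set Vr) ∈ R'

section SharingOfNewGroups

variable {VI : Set Vr} {d : SFLElem Vr} {x : Vr} {t : HTerm Sig ar Vr} {R' : Set (Set Vr)}

lemma linkedCover_of_mem_amguNewSh (hR' : CoversNewSharing VI d x t R') {T : Set Vr}
    (hT : T ∈ amguNewSh VI d x t) : LinkedCover R' d.sh T := by
  simp only [amguNewSh] at hT
  split_ifs at hT with hfree hlin hlinx hlint <;> obtain ⟨S₁, hS₁, S₂, hS₂, rfl⟩ := hT
  · exact (LinkedCover.of_mem hS₁).union hR'.x_t (.of_mem hS₂)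
  · exact LinkedCover.of_mem_linear hR'.x_t hS₁ hS₂
  · exact (LinkedCover.of_mem_starSH (hR'.x_x fun h => hlin ⟨hlinx, h⟩) hS₁).union hR'.x_t
      (.of_mem hS₂)
  · exact (LinkedCover.of_mem hS₁).union hR'.x_t (.of_mem_starSH (hR'.t_t hlinx) hS₂)
  · exact (LinkedCover.of_mem_starSH (hR'.x_x hlint) hS₁).union hR'.x_t
      (.of_mem_starSH (hR'.t_t hlinx) hS₂)

/-- The condition under which `compA` relates `u` and `v`. -/
def ComposedPair (R R' : Set (Set Vr)) (u v : Vr) : Prop :=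
  ({u, v} : Set Vr) ∈ R ∨
    ∃ a b : Vr, (u = a ∨ ({u, a} : Set Vr) ∈ R) ∧ ({a, b} : Set Vr) ∈ R' ∧
      (b = v ∨ ({b, v} : Set Vr) ∈ R)

section ComposedPair

variable {R sh : Set (Set Vr)}
  (hpair : ∀ U ∈ sh, ∀ p ∈ U, ∀ q ∈ U, p ≠ q → ({p, q} : Set Vr) ∈ R)
include hpair

lemma composedPair_of_linked {U V : Set Vr} {u v : Vr} (hU : U ∈ sh) (hV : V ∈ sh) (hu : u ∈ U)
    (hv : v ∈ V) (h : Linked R' U V) : ComposedPair R R' u v := by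
  obtain ⟨a, ha, b, hb, hab⟩ := h
  exact Or.inr ⟨a, b, (eq_or_ne u a).imp_right (hpair U hU u hu a ha), hab,
    (eq_or_ne b v).imp_right (hpair V hV b hb v hv)⟩

lemma composedPair_of_mem_sUnion_relSH {V W : Set Vr} {u v : Vr}
    (hVW : ∀ a ∈ V, ∀ b ∈ W, ({a, b} : Set Vr) ∈ R')
    (hu : u ∈ ⋃₀ relSH V sh) (hv : v ∈ ⋃₀ relSH W sh) : ComposedPair R R' u v := by
  obtain ⟨U, hU, huU⟩ := hu
  obtain ⟨U', hU', hvU'⟩ := hv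
  exact composedPair_of_linked hpair hU.1 hU'.1 huU hvU' (linked_of_mem_relSH hVW hU hU')

lemma composedPair_of_linkedCover {T : Set Vr} (hT : LinkedCover R' sh T) {u v : Vr}
    (hu : u ∈ T) (hv : v ∈ T) (hne : u ≠ v) : ComposedPair R R' u v := by
  obtain ⟨F, hF, rfl, hlinked⟩ := hT
  obtain ⟨U, hU, huU⟩ := hu
  obtain ⟨V, hV, hvV⟩ := hv
  by_cases hUV : U = V
  · subst hUV
    exact Or.inl (hpair U (hF hU) u huU v hvV hne)
  · exact composedPair_of_linked hpair (hF hU) (hF hV) huU hvV (hlinked hU hV hUV)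

end ComposedPair

lemma composedPair_of_notMem_amguNewLin {R : Set (Set Vr)}
    (hpair : ∀ U ∈ d.sh, ∀ p ∈ U, ∀ q ∈ U, p ≠ q → ({p, q} : Set Vr) ∈ R)
    (hR' : CoversNewSharing VI d x t R') {y : Vr} (hyl : y ∈ d.l)
    (hy : y ∉ amguNewLin VI d x t) : ComposedPair R R' y y := by
  simp only [amguNewLin] at hy
  split_ifs at hy with hlin hlinx hlint <;>
    simp only [Set.mem_sdiff, hyl, true_and, not_not] at hy
  · exact composedPair_of_mem_sUnion_relSH hpair hR'.x_t hy.1 hy.2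
  · exact composedPair_of_mem_sUnion_relSH hpair (hR'.x_x fun h => hlin ⟨hlinx, h⟩) hy hy
  · exact composedPair_of_mem_sUnion_relSH hpair (hR'.t_t hlinx) hy hy
  · rcases hy with hy | hy
    · exact composedPair_of_mem_sUnion_relSH hpair (hR'.x_x hlint) hy hy
    · exact composedPair_of_mem_sUnion_relSH hpair (hR'.t_t hlinx) hy hy

end SharingOfNewGroups

section Abstraction

variable {VI : Set Vr} {d : SFLElem Vr} {k : ASubElem Vr}

lemma G_subset_of_alphaASub_le (hbot : d ≠ botS VI)
    (hα : asubLE (alphaASub VI d) (some k)) : k.G ⊆ VI \ ⋃₀ d.sh := by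
  rw [alphaASub, if_neg hbot] at hα
  exact hα.1

lemma pair_mem_R_of_alphaASub_le (hsh : d.sh ⊆ SG VI) (hbot : d ≠ botS VI)
    (hα : asubLE (alphaASub VI d) (some k)) :
    ∀ U ∈ d.sh, ∀ p ∈ U, ∀ q ∈ U, p ≠ q → ({p, q} : Set Vr) ∈ k.R := by
  rw [alphaASub, if_neg hbot] at hα
  exact fun U hU p hp q hq hne =>
    hα.2 (Or.inr ⟨p, q, (hsh hU).1 hp, (hsh hU).1 hq, hne, ⟨U, hU, hp, hq⟩, rfl⟩)

lemma singleton_mem_R_of_alphaASub_le (hsh : d.sh ⊆ SG VI) (hbot : d ≠ botS VI)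
    (hα : asubLE (alphaASub VI d) (some k)) :
    ∀ y ∈ ⋃₀ d.sh, y ∉ d.l → ({y} : Set Vr) ∈ k.R := by
  rw [alphaASub, if_neg hbot] at hα
  rintro y ⟨U, hU, hyU⟩ hyl
  exact hα.2 (Or.inl ⟨y, (hsh hU).1 hyU, ⟨U, hU, hyU⟩, hyl, rfl⟩)

variable (hG : k.G ⊆ VI \ ⋃₀ d.sh)
  (hpair : ∀ U ∈ d.sh, ∀ p ∈ U, ∀ q ∈ U, p ≠ q → ({p, q} : Set Vr) ∈ k.R)
  (hsingle : ∀ y ∈ ⋃₀ d.sh, y ∉ d.l → ({y} : Set Vr) ∈ k.R)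

include hG hpair hsingle in
lemma occlinD_of_occlinK {s : HTerm Sig ar Vr} {y : Vr} (hyVI : y ∈ VI) (hys : y ∈ s.vars)
    (h : occlinK k y s) : occlinD VI d y s := by
  rcases h with hyG | ⟨hcount, hR⟩
  · exact Or.inl (Set.singleton_subset_iff.2 (hG hyG))
  by_cases hy : y ∈ ⋃₀ d.sh
  · refine Or.inr ⟨hcount, by_contra fun hyl => hR y hys ?_, fun z hz hne => ?_⟩
    · rw [Set.pair_eq_singleton]
      exact hsingle y hy hyl
    · exact Set.eq_empty_iff_forall_notMem.2 fun U ⟨hUy, hUz⟩ => hR z hz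
        (hpair U hUy.1 y (mem_of_mem_relSH_singleton hUy) z (mem_of_mem_relSH_singleton hUz) hne)
  · exact Or.inl (Set.singleton_subset_iff.2 ⟨hyVI, hy⟩)

include hG hpair hsingle in
lemma chiT_eq_two_of_not_linD {s : HTerm Sig ar Vr} (hs : s.vars ⊆ VI)
    (h : ¬ linD VI d s) : chiT k s = 2 := by
  unfold chiT
  split_ifs with h0 h1
  · exact absurd (fun y hy => occlinD_of_occlinK hG hpair hsingle (hs hy) hy (Or.inl (h0 hy))) h
  · exact absurd (fun y hy => occlinD_of_occlinK hG hpair hsingle (hs hy) hy (h1 y hy)) h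
  · rfl

include hG in
lemma groundD_of_chiT_eq_zero {s : HTerm Sig ar Vr} (h : chiT k s = 0) : groundD VI d s := by
  unfold chiT at h
  split_ifs at h with h0
  exact h0.trans hG

end Abstraction

lemma solnA_of_chiT_eq_zero (VI : Set Vr) (k : ASubElem Vr) (x : Vr) (t : HTerm Sig ar Vr)
    (h : chiT k (HTerm.var x : HTerm Sig ar Vr) = 0 ∨ chiT k t = 0) :
    solnA VI k x t = ⟨{x} ∪ t.vars, ∅⟩ := by
  simp only [solnA]
  rw [if_pos h]

lemma exists_solnA_eq_binPair (VI : Set Vr) (k : ASubElem Vr) (x : Vr) (t : HTerm Sig ar Vr)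
    (h : ¬ (chiT k (HTerm.var x : HTerm Sig ar Vr) = 0 ∨ chiT k t = 0)) :
    ∃ A B, solnA VI k x t = ⟨∅, binPair VI A B⟩ ∧ x ∈ A ∧ t.vars ⊆ B ∧
      (chiT k t = 2 → x ∈ B) ∧ (chiT k (HTerm.var x : HTerm Sig ar Vr) = 2 → t.vars ⊆ A) := by
  simp only [solnA]
  rw [if_neg h]
  split_ifs with h₁ h₂ h₃
  · exact ⟨{x}, t.vars, rfl, rfl, subset_rfl, fun _ => by omega, fun _ => by omega⟩
  · exact ⟨{x}, {x} ∪ t.vars, rfl, rfl, Set.subset_union_right, fun _ => Or.inl rfl,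
      fun _ => by omega⟩
  · exact ⟨{x} ∪ t.vars, t.vars, rfl, Or.inl rfl, subset_rfl, fun _ => by omega,
      fun _ => Set.subset_union_right⟩
  · exact ⟨{x} ∪ t.vars, {x} ∪ t.vars, rfl, Or.inl rfl, Set.subset_union_right,
      fun _ => Or.inl rfl, fun _ => Set.subset_union_right⟩

lemma pair_mem_binPair {VI A B : Set Vr} {a b : Vr} (ha : a ∈ A) (hb : b ∈ B) (haVI : a ∈ VI)
    (hbVI : b ∈ VI) : ({a, b} : Set Vr) ∈ binPair VI A B :=
  ⟨a, ha, b, hb, rfl, Set.insert_subset haVI (Set.singleton_subset_iff.2 hbVI)⟩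

lemma coversNewSharing_binPair {VI A B : Set Vr} {d : SFLElem Vr} {x : Vr}
    {t : HTerm Sig ar Vr} (hxt : insert x t.vars ⊆ VI) (hxA : x ∈ A) (htB : t.vars ⊆ B)
    (hxB : ¬ linD VI d t → x ∈ B)
    (htA : ¬ linD VI d (HTerm.var x : HTerm Sig ar Vr) → t.vars ⊆ A) :
    CoversNewSharing VI d x t (binPair VI A B) where
  x_t := by
    rintro a rfl b hb
    exact pair_mem_binPair hxA (htB hb) (hxt (.inl rfl)) (hxt (.inr hb))
  x_x h := by
    rintro a rfl b rfl
    exact pair_mem_binPair hxA (hxB h) (hxt (.inl rfl)) (hxt (.inl rfl))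
  t_t h := by
    intro a ha b hb
    exact pair_mem_binPair (htA h ha) (htB hb) (hxt (.inr ha)) (hxt (.inr hb))

lemma pair_mem_compA_R {VI : Set Vr} {κ κ' : ASubElem Vr} {u v : Vr}
    (hu : u ∈ VI \ (κ.G ∪ κ'.G)) (hv : v ∈ VI \ (κ.G ∪ κ'.G))
    (h : ComposedPair κ.R κ'.R u v) : ({u, v} : Set Vr) ∈ (compA VI κ κ').R := by
  refine ⟨u, v, rfl, Set.insert_subset hu.1 (Set.singleton_subset_iff.2 hv.1), ?_, h⟩
  refine Set.eq_empty_iff_forall_notMem.2 fun z ⟨hz, hzG⟩ => ?_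
  rcases hz with rfl | rfl
  exacts [hu.2 hzG, hv.2 hzG]

lemma alphaASub_le_some_compA {VI : Set Vr} {d' : SFLElem Vr} {κ κ' : ASubElem Vr}
    (hG : κ.G ∪ κ'.G ⊆ VI \ ⋃₀ d'.sh)
    (hsingle : ∀ y ∈ ⋃₀ d'.sh, y ∉ d'.l → ComposedPair κ.R κ'.R y y)
    (hpair : ∀ T ∈ d'.sh, ∀ u ∈ T, ∀ v ∈ T, u ≠ v → ComposedPair κ.R κ'.R u v) :
    asubLE (alphaASub VI d') (some (compA VI κ κ')) := by
  unfold alphaASub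
  split_ifs
  · trivial
  have hnG : ∀ {T u}, T ∈ d'.sh → u ∈ T → u ∉ κ.G ∪ κ'.G :=
    fun hT hu hu' => (hG hu').2 ⟨_, hT, hu⟩
  refine ⟨hG, ?_⟩
  rintro S (⟨y, hyVI, ⟨T, hT, hyT⟩, hyl, rfl⟩ | ⟨u, v, huVI, hvVI, hne, ⟨T, hT, huT, hvT⟩, rfl⟩)
  · rw [← Set.pair_eq_singleton]
    exact pair_mem_compA_R ⟨hyVI, hnG hT hyT⟩ ⟨hyVI, hnG hT hyT⟩ (hsingle y ⟨T, hT, hyT⟩ hyl)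
  · exact pair_mem_compA_R ⟨huVI, hnG hT huT⟩ ⟨hvVI, hnG hT hvT⟩ (hpair T hT u huT v hvT hne)

section AmguCase

variable {VI : Set Vr} {d : SFLElem Vr} {k : ASubElem Vr} {x : Vr} {t : HTerm Sig ar Vr}
  (hG : k.G ⊆ VI \ ⋃₀ d.sh)
  (hpair : ∀ U ∈ d.sh, ∀ p ∈ U, ∀ q ∈ U, p ≠ q → ({p, q} : Set Vr) ∈ k.R)
  (hsingle : ∀ y ∈ ⋃₀ d.sh, y ∉ d.l → ({y} : Set Vr) ∈ k.R)
  (hxt : insert x t.vars ⊆ VI)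
include hG hpair hsingle hxt

lemma alphaASub_amguCore_le_of_groundD
    (hground : groundD VI d (HTerm.var x : HTerm Sig ar Vr) ∨ groundD VI d t) :
    asubLE (alphaASub VI (amguCore VI d x t)) (some (compA VI k ⟨{x} ∪ t.vars, ∅⟩)) := by
  have hsh : (amguCore VI d x t).sh ⊆ nrelSH ({x} ∪ t.vars) d.sh := by
    simpa [amguNewSh_eq_empty_of_groundD hground] using amguCore_sh_subset VI d x t
  have hl : d.l ⊆ (amguCore VI d x t).l :=
    (subset_amguNewLin_of_groundD hground).trans (amguNewLin_subset_amguCore_l VI d x t)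
  have hcov : ⋃₀ (amguCore VI d x t).sh ⊆ ⋃₀ d.sh :=
    Set.sUnion_mono fun T hT => (hsh hT).1
  refine alphaASub_le_some_compA ?_ (fun y hy hyl => Or.inl ?_)
    (fun T hT u hu v hv hne => Or.inl (hpair T (hsh hT).1 u hu v hv hne))
  · rintro z (hz | hz)
    · exact ⟨(hG hz).1, fun h => (hG hz).2 (hcov h)⟩
    · refine ⟨?_, fun ⟨T, hT, hzT⟩ => notMem_of_mem_nrelSH (hsh hT) hzT hz⟩
      rcases hz with rfl | hz
      exacts [hxt (.inl rfl), hxt (.inr hz)]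
  · rw [Set.pair_eq_singleton]
    exact hsingle y (hcov hy) fun h => hyl (hl h)

lemma alphaASub_amguCore_le_of_not_ground
    (hng : ¬ (chiT k (HTerm.var x : HTerm Sig ar Vr) = 0 ∨ chiT k t = 0)) :
    asubLE (alphaASub VI (amguCore VI d x t)) (some (compA VI k (solnA VI k x t))) := by
  obtain ⟨A, B, hsoln, hxA, htB, hxB, htA⟩ := exists_solnA_eq_binPair VI k x t hng
  have hR' : CoversNewSharing VI d x t (solnA VI k x t).R := by
    rw [hsoln]
    exact coversNewSharing_binPair hxt hxA htB
      (fun h => hxB (chiT_eq_two_of_not_linD hG hpair hsingle (fun _ h' => hxt (.inr h')) h))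
      (fun h => htA (chiT_eq_two_of_not_linD hG hpair hsingle
        (Set.singleton_subset_iff.2 (hxt (.inl rfl))) h))
  have hcov : ⋃₀ (amguCore VI d x t).sh ⊆ ⋃₀ d.sh := by
    rintro z ⟨T, hT, hzT⟩
    rcases amguCore_sh_subset VI d x t hT with hT | hT
    · exact ⟨T, hT.1, hzT⟩
    · obtain ⟨F, hF, rfl, -⟩ := linkedCover_of_mem_amguNewSh hR' hT
      exact Set.sUnion_mono hF hzT
  refine alphaASub_le_some_compA ?_ (fun y hy hyl => ?_) (fun T hT u hu v hv hne => ?_)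
  · rw [hsoln, Set.union_empty]
    exact fun z hz => ⟨(hG hz).1, fun h => (hG hz).2 (hcov h)⟩
  · by_cases hyd : y ∈ d.l
    · exact composedPair_of_notMem_amguNewLin hpair hR' hyd
        fun h => hyl (amguNewLin_subset_amguCore_l VI d x t h)
    · rw [ComposedPair, Set.pair_eq_singleton]
      exact Or.inl (hsingle y (hcov hy) hyd)
  · rcases amguCore_sh_subset VI d x t hT with hT | hT
    · exact Or.inl (hpair T hT.1 u hu v hv hne)
    · exact composedPair_of_linkedCover hpair (linkedCover_of_mem_amguNewSh hR' hT) hu hv hne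

end AmguCase

end

theorem amguRT_more_precise_than_amguASub_general
    {Sig Vr : Type} {ar : Sig → ℕ}
    (VI : Set Vr)
    (d : SFLElem Vr) (_hd : d.WF VI)
    (κ : Option (ASubElem Vr))
    (x : Vr) (t : HTerm Sig ar Vr)
    (_hxt : insert x t.vars ⊆ VI)
    (_hle : asubLE (alphaASub VI d) κ) :
    asubLE (alphaASub VI (amguRT VI d x t)) (amguASub VI κ x t) := by
  by_cases hbot : d = botS VI
  · simp [amguRT, hbot, alphaASub, asubLE]
  rcases κ with _ | k
  · simp [alphaASub, hbot, asubLE] at _hle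
  have hG := G_subset_of_alphaASub_le hbot _hle
  have hpair := pair_mem_R_of_alphaASub_le _hd.1 hbot _hle
  have hsingle := singleton_mem_R_of_alphaASub_le _hd.1 hbot _hle
  rw [amguRT, if_neg hbot]
  by_cases hground : chiT k (HTerm.var x : HTerm Sig ar Vr) = 0 ∨ chiT k t = 0
  · rw [amguASub, solnA_of_chiT_eq_zero VI k x t hground]
    exact alphaASub_amguCore_le_of_groundD hG hpair hsingle _hxt
      (hground.imp (groundD_of_chiT_eq_zero hG) (groundD_of_chiT_eq_zero hG))
  · exact alphaASub_amguCore_le_of_not_ground hG hpair hsingle _hxt hground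

/-- The abstract unification on `SFL` is uniformly more
precise than the abstract unification on the pair-sharing domain `ASub`. -/
theorem amguRT_more_precise_than_amguASub
    {Sig Vr : Type} {ar : Sig → ℕ}
    (VI : Set Vr) (_hVI : VI.Finite)
    (d : SFLElem Vr) (_hd : d.WF VI)
    (κ : Option (ASubElem Vr)) (_hκ : ∀ k, κ = some k → k.WF VI)
    (x : Vr) (t : HTerm Sig ar Vr)
    (_hxt : insert x t.vars ⊆ VI) (_hb : t ≠ HTerm.var x)
    (_hle : asubLE (alphaASub VI d) κ) :
    asubLE (alphaASub VI (amguRT VI d x t)) (amguASub VI κ x t) :=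
  amguRT_more_precise_than_amguASub_general VI d _hd κ x t _hxt _hle
end
end

section
/- Let d1, d2 ∈ SFL be such that ρ_PSD(d1) = ρ_PSD(d2). Then for every sequence of bindings bs ∈ Bind* (each binding x ↦ t with {x} ∪ vars(t) ⊆ VI), ρ_PSD(aunify_S(d1, bs)) = ρ_PSD(aunify_S(d2, bs)); i.e., ρ_PSD is a congruence with respect to the abstract unification operator aunify_S. -/
open Classical

noncomputable section

section Congruence

variable {Vr : Type} {VI : Set Vr}

namespace RhoAux

lemma mem_relSH {V : Set Vr} {sh : Set (Set Vr)} {S : Set Vr} :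
    S ∈ relSH V sh ↔ S ∈ sh ∧ (S ∩ V).Nonempty := by
  simp [relSH, Set.nonempty_iff_ne_empty]

lemma mem_nrelSH {V : Set Vr} {sh : Set (Set Vr)} {S : Set Vr} :
    S ∈ nrelSH V sh ↔ S ∈ sh ∧ S ∩ V = ∅ := by
  simp only [nrelSH, Set.mem_diff, mem_relSH, not_and, and_congr_right_iff]
  intro h
  constructor
  · intro h2
    by_contra hne
    exact (Set.nonempty_iff_ne_empty.mpr hne) |> (fun hn => (h2 h hn))
  · intro h2 _ hn
    exact absurd h2 (Set.nonempty_iff_ne_empty.mp hn)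

lemma pairs_of_mem_rho {sh : Set (Set Vr)} {S : Set Vr}
    (hS : S ∈ rhoPSDsh VI sh) {p q : Vr} (hp : p ∈ S) (hq : q ∈ S) :
    ∃ U ∈ sh, p ∈ U ∧ q ∈ U ∧ U ⊆ S := by
  obtain ⟨_, h⟩ := hS
  have := h p hp
  have hq' : q ∈ ⋃₀ {U | U ∈ sh ∧ p ∈ U ∧ U ⊆ S} := this ▸ hq
  obtain ⟨U, ⟨hU, hpU, hUS⟩, hqU⟩ := hq'
  exact ⟨U, hU, hpU, hqU, hUS⟩

lemma mem_rho_of_pairs {sh : Set (Set Vr)} {S : Set Vr}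
    (hSG : S ∈ SG VI)
    (h : ∀ p ∈ S, ∀ q ∈ S, ∃ U ∈ sh, p ∈ U ∧ q ∈ U ∧ U ⊆ S) :
    S ∈ rhoPSDsh VI sh := by
  refine ⟨hSG, fun y hy => ?_⟩
  apply Set.Subset.antisymm
  · intro z hz
    obtain ⟨U, hU, hyU, hzU, hUS⟩ := h y hy z hz
    exact ⟨U, ⟨hU, hyU, hUS⟩, hzU⟩
  · intro z hz
    obtain ⟨U, ⟨_, _, hUS⟩, hzU⟩ := hz
    exact hUS hzU

lemma rho_mono {sh1 sh2 : Set (Set Vr)} (h : sh1 ⊆ sh2) :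
    rhoPSDsh VI sh1 ⊆ rhoPSDsh VI sh2 := by
  intro S hS
  refine mem_rho_of_pairs hS.1 (fun p hp q hq => ?_)
  obtain ⟨U, hU, h1, h2, h3⟩ := pairs_of_mem_rho hS hp hq
  exact ⟨U, h hU, h1, h2, h3⟩

lemma rho_extensive {sh : Set (Set Vr)} (h : sh ⊆ SG VI) :
    sh ⊆ rhoPSDsh VI sh := by
  intro S hS
  refine mem_rho_of_pairs (h hS) (fun p hp q hq => ⟨S, hS, hp, hq, subset_rfl⟩)

lemma rho_sub_rho {sh1 sh2 : Set (Set Vr)} (h : sh1 ⊆ rhoPSDsh VI sh2) :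
    rhoPSDsh VI sh1 ⊆ rhoPSDsh VI sh2 := by
  intro S hS
  refine mem_rho_of_pairs hS.1 (fun p hp q hq => ?_)
  obtain ⟨U, hU, hpU, hqU, hUS⟩ := pairs_of_mem_rho hS hp hq
  obtain ⟨W, hW, hpW, hqW, hWU⟩ := pairs_of_mem_rho (h hU) hpU hqU
  exact ⟨W, hW, hpW, hqW, hWU.trans hUS⟩

lemma rho_eq_of_mutual {sh1 sh2 : Set (Set Vr)}
    (h12 : sh1 ⊆ rhoPSDsh VI sh2) (h21 : sh2 ⊆ rhoPSDsh VI sh1) :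
    rhoPSDsh VI sh1 = rhoPSDsh VI sh2 :=
  Set.Subset.antisymm (rho_sub_rho h12) (rho_sub_rho h21)

/-- the key covering tool -/
lemma cover {sh1 sh2 : Set (Set Vr)} (h12 : sh1 ⊆ rhoPSDsh VI sh2)
    {G : Set Vr} (hG : G ∈ sh1) {p q : Vr} (hp : p ∈ G) (hq : q ∈ G) :
    ∃ W ∈ sh2, p ∈ W ∧ q ∈ W ∧ W ⊆ G :=
  pairs_of_mem_rho (h12 hG) hp hq

lemma rho_empty : rhoPSDsh VI (∅ : Set (Set Vr)) = ∅ := by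
  ext S
  simp only [Set.mem_empty_iff_false, iff_false]
  rintro ⟨⟨_, hne⟩, h⟩
  obtain ⟨y, hy⟩ := Set.nonempty_iff_ne_empty.mpr hne
  have := h y hy
  simp only [Set.mem_empty_iff_false, false_and, Set.setOf_false, Set.sUnion_empty] at this
  exact absurd (this ▸ hy) (Set.notMem_empty y)


section Invariance

variable {sh1 sh2 : Set (Set Vr)}

lemma pair_share (h12 : sh1 ⊆ rhoPSDsh VI sh2) {p q : Vr}
    (h : ∃ S ∈ sh1, p ∈ S ∧ q ∈ S) : ∃ S ∈ sh2, p ∈ S ∧ q ∈ S := by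
  obtain ⟨S, hS, hp, hq⟩ := h
  obtain ⟨W, hW, hpW, hqW, _⟩ := cover h12 hS hp hq
  exact ⟨W, hW, hpW, hqW⟩

lemma sUnion_sub (h12 : sh1 ⊆ rhoPSDsh VI sh2) : ⋃₀ sh1 ⊆ ⋃₀ sh2 := by
  rintro y ⟨S, hS, hy⟩
  obtain ⟨W, hW, hyW, _, _⟩ := cover h12 hS hy hy
  exact ⟨W, hW, hyW⟩

lemma sUnion_rel_sub (h12 : sh1 ⊆ rhoPSDsh VI sh2) (V : Set Vr) :
    ⋃₀ relSH V sh1 ⊆ ⋃₀ relSH V sh2 := by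
  rintro y ⟨S, hS, hy⟩
  rw [mem_relSH] at hS
  obtain ⟨hS1, v, hvS, hvV⟩ := hS
  obtain ⟨W, hW, hyW, hvW, _⟩ := cover h12 hS1 hy hvS
  exact ⟨W, mem_relSH.mpr ⟨hW, v, hvW, hvV⟩, hyW⟩

lemma rel_inter_rel_empty_iff {y z : Vr} {sh : Set (Set Vr)} :
    relSH {y} sh ∩ relSH {z} sh = ∅ ↔ ¬ ∃ S ∈ sh, y ∈ S ∧ z ∈ S := by
  constructor
  · rintro h ⟨S, hS, hy, hz⟩
    have : S ∈ relSH {y} sh ∩ relSH {z} sh :=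
      ⟨mem_relSH.mpr ⟨hS, y, hy, rfl⟩, mem_relSH.mpr ⟨hS, z, hz, rfl⟩⟩
    simp [h] at this
  · intro h
    ext S
    simp only [Set.mem_inter_iff, Set.mem_empty_iff_false, iff_false]
    rintro ⟨h1, h2⟩
    rw [mem_relSH] at h1 h2
    obtain ⟨hS, a, haS, ha⟩ := h1
    obtain ⟨_, b, hbS, hb⟩ := h2
    rw [Set.mem_singleton_iff] at ha hb
    exact h ⟨S, hS, ha ▸ haS, hb ▸ hbS⟩

end Invariance

section Star

lemma SG_nonempty {S : Set Vr} (h : S ∈ SG VI) : S.Nonempty :=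
  Set.nonempty_iff_ne_empty.mpr h.2

lemma star_of_cover (hVI : VI.Finite) {sh : Set (Set Vr)} {S : Set Vr}
    (hSG : S ∈ SG VI) (h : ∀ a ∈ S, ∃ W ∈ sh, a ∈ W ∧ W ⊆ S) :
    S ∈ starSH VI sh := by
  refine ⟨hSG, {W | W ∈ sh ∧ W ⊆ S}, ?_, ?_, fun W hW => hW.1, ?_⟩
  · exact ((hVI.subset hSG.1).finite_subsets).subset (fun W hW => hW.2)
  · obtain ⟨a, ha⟩ := SG_nonempty hSG
    obtain ⟨W, hW, _, hWS⟩ := h a ha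
    exact ⟨W, hW, hWS⟩
  · apply Set.Subset.antisymm
    · intro a ha
      obtain ⟨W, hW, haW, hWS⟩ := h a ha
      exact ⟨W, ⟨hW, hWS⟩, haW⟩
    · exact Set.sUnion_subset (fun W hW => hW.2)

lemma star_single {sh : Set (Set Vr)} {S : Set Vr} (hS : S ∈ sh)
    (hSG : S ∈ SG VI) : S ∈ starSH VI sh :=
  ⟨hSG, {S}, Set.finite_singleton S, ⟨S, rfl⟩, by simp [hS], by simp⟩

lemma star_union_single {sh : Set (Set Vr)} {A W : Set Vr}
    (hA : A ∈ starSH VI sh) (hW : W ∈ sh) (hWVI : W ⊆ VI) :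
    A ∪ W ∈ starSH VI sh := by
  obtain ⟨hSG, F, hfin, hne, hsub, hU⟩ := hA
  refine ⟨⟨Set.union_subset hSG.1 hWVI, ?_⟩, insert W F, hfin.insert W, ?_, ?_, ?_⟩
  · exact Set.nonempty_iff_ne_empty.mp ((SG_nonempty hSG).mono Set.subset_union_left)
  · exact ⟨W, Set.mem_insert W F⟩
  · intro U hU'
    rcases Set.mem_insert_iff.mp hU' with h | h
    · exact h ▸ hW
    · exact hsub h
  · rw [Set.sUnion_insert, ← hU, Set.union_comm]

lemma mem_of_relx {x : Vr} {sh : Set (Set Vr)} {W : Set Vr}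
    (h : W ∈ relSH {x} sh) : x ∈ W := by
  rw [mem_relSH] at h
  obtain ⟨_, v, hv, hvx⟩ := h
  rw [Set.mem_singleton_iff] at hvx
  exact hvx ▸ hv

lemma mem_of_starx {x : Vr} {sh : Set (Set Vr)} {W : Set Vr}
    (h : W ∈ starSH VI (relSH {x} sh)) : x ∈ W := by
  obtain ⟨_, F, _, ⟨P, hP⟩, hsub, hU⟩ := h
  exact hU ▸ ⟨P, hP, mem_of_relx (hsub hP)⟩

end Star

section Homes

variable {sh1 sh2 : Set (Set Vr)} {x : Vr} {Vt : Set Vr} {S G : Set Vr}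

lemma exX (h12 : sh1 ⊆ rhoPSDsh VI sh2) (hG : G ∈ sh1) (hGS : G ⊆ S)
    (hx : x ∈ G) {r : Vr} (hr : r ∈ G) :
    ∃ X ∈ relSH {x} sh2, r ∈ X ∧ x ∈ X ∧ X ⊆ S := by
  obtain ⟨W, hW, hxW, hrW, hWG⟩ := cover h12 hG hx hr
  exact ⟨W, mem_relSH.mpr ⟨hW, x, hxW, rfl⟩, hrW, hxW, hWG.trans hGS⟩

lemma exT (h12 : sh1 ⊆ rhoPSDsh VI sh2) (hG : G ∈ sh1) (hGS : G ⊆ S)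
    {v : Vr} (hv : v ∈ G) (hvVt : v ∈ Vt) {r : Vr} (hr : r ∈ G) :
    ∃ T ∈ relSH Vt sh2, r ∈ T ∧ v ∈ T ∧ T ⊆ S := by
  obtain ⟨W, hW, hvW, hrW, hWG⟩ := cover h12 hG hv hr
  exact ⟨W, mem_relSH.mpr ⟨hW, v, hvW, hvVt⟩, hrW, hvW, hWG.trans hGS⟩

end Homes


section Keys

variable {sh1 sh2 : Set (Set Vr)} {x : Vr} {Vt : Set Vr} {S : Set Vr}

/-- construct a pair-covering element of the target from an X-part and a T-part -/
lemma mkU {L2 R2 : Set (Set Vr)} {X T : Set Vr} (hX : X ∈ L2) (hT : T ∈ R2)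
    (hXS : X ⊆ S) (hTS : T ⊆ S) (hwit : ((X ∪ T) ∩ (Vt \ {x})).Nonempty)
    {p q : Vr} (hp : p ∈ X ∪ T) (hq : q ∈ X ∪ T) :
    ∃ U ∈ nrelSH ({x} ∪ Vt) sh2 ∪ relSH (Vt \ {x}) (binSH L2 R2),
      p ∈ U ∧ q ∈ U ∧ U ⊆ S :=
  ⟨X ∪ T, Or.inr (mem_relSH.mpr ⟨⟨X, hX, T, hT, rfl⟩,
    by rwa [Set.nonempty_iff_ne_empty] at hwit ⊢⟩),
    hp, hq, Set.union_subset hXS hTS⟩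

lemma mkM {L2 R2 : Set (Set Vr)} {W : Set Vr} (hW : W ∈ sh2)
    (hdis : W ∩ ({x} ∪ Vt) = ∅) (hWS : W ⊆ S) {p q : Vr}
    (hp : p ∈ W) (hq : q ∈ W) :
    ∃ U ∈ nrelSH ({x} ∪ Vt) sh2 ∪ relSH (Vt \ {x}) (binSH L2 R2),
      p ∈ U ∧ q ∈ U ∧ U ⊆ S :=
  ⟨W, Or.inl (mem_nrelSH.mpr ⟨hW, hdis⟩), hp, hq, hWS⟩

lemma disj_of_cases {W : Set Vr} (hxW : x ∉ W) (hWVt : ¬ (W ∩ Vt).Nonempty) :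
    W ∩ ({x} ∪ Vt) = ∅ := by
  ext a
  simp only [Set.mem_inter_iff, Set.mem_union, Set.mem_singleton_iff,
    Set.mem_empty_iff_false, iff_false]
  rintro ⟨haW, rfl | haVt⟩
  · exact hxW haW
  · exact hWVt ⟨a, haW, haVt⟩

lemma witness_of_xnotmem {W : Set Vr} (hxW : x ∉ W) (hWVt : (W ∩ Vt).Nonempty) :
    (W ∩ (Vt \ {x})).Nonempty := by
  obtain ⟨v, hvW, hvVt⟩ := hWVt
  exact ⟨v, hvW, hvVt, fun h => hxW (h ▸ hvW)⟩

/-- the generic same-home construction -/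
lemma sameHome {L2 R2 : Set (Set Vr)} (h12 : sh1 ⊆ rhoPSDsh VI sh2)
    {G : Set Vr} (hG : G ∈ sh1) (hGS : G ⊆ S)
    (hA2L : relSH {x} sh2 ⊆ L2) (hB2R : relSH Vt sh2 ⊆ R2)
    (hXx : ∃ X ∈ relSH {x} sh2, X ⊆ S)
    (hTw : ∃ T ∈ relSH Vt sh2, T ⊆ S ∧ (T ∩ (Vt \ {x})).Nonempty)
    {p q : Vr} (hp : p ∈ G) (hq : q ∈ G) :
    ∃ U ∈ nrelSH ({x} ∪ Vt) sh2 ∪ relSH (Vt \ {x}) (binSH L2 R2),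
      p ∈ U ∧ q ∈ U ∧ U ⊆ S := by
  obtain ⟨W, hW, hpW, hqW, hWG⟩ := cover h12 hG hp hq
  by_cases hxW : x ∈ W
  · obtain ⟨T, hT, hTS, hTwit⟩ := hTw
    exact mkU (hA2L (mem_relSH.mpr ⟨hW, x, hxW, rfl⟩)) (hB2R hT)
      (hWG.trans hGS) hTS (hTwit.mono (Set.inter_subset_inter_left _
        Set.subset_union_right)) (Or.inl hpW) (Or.inl hqW)
  · by_cases hWVt : (W ∩ Vt).Nonempty
    · obtain ⟨X, hX, hXS⟩ := hXx
      exact mkU (hA2L hX) (hB2R (mem_relSH.mpr ⟨hW, hWVt⟩)) hXS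
        (hWG.trans hGS) ((witness_of_xnotmem hxW hWVt).mono
          (Set.inter_subset_inter_left _ Set.subset_union_right))
        (Or.inr hpW) (Or.inr hqW)
    · exact mkM hW (disj_of_cases hxW hWVt) (hWG.trans hGS) hpW hqW

/-- Key lemma, free case: `sh'' = bin(sh_x, sh_t)`. -/
lemma key_F (hsg1 : sh1 ⊆ SG VI) (h12 : sh1 ⊆ rhoPSDsh VI sh2)
    (hS : S ∈ binSH (relSH {x} sh1) (relSH Vt sh1))
    (hw : (S ∩ (Vt \ {x})).Nonempty) :
    S ∈ rhoPSDsh VI (nrelSH ({x} ∪ Vt) sh2 ∪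
      relSH (Vt \ {x}) (binSH (relSH {x} sh2) (relSH Vt sh2))) := by
  obtain ⟨A, hA, B, hB, rfl⟩ := hS
  have hA1 : A ∈ sh1 := (mem_relSH.mp hA).1
  have hxA : x ∈ A := mem_of_relx hA
  have hB1 : B ∈ sh1 := (mem_relSH.mp hB).1
  have hBVt : (B ∩ Vt).Nonempty := (mem_relSH.mp hB).2
  have hSG : A ∪ B ∈ SG VI := by
    refine ⟨Set.union_subset (hsg1 hA1).1 (hsg1 hB1).1, ?_⟩
    exact Set.nonempty_iff_ne_empty.mp ⟨x, Or.inl hxA⟩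
  obtain ⟨w, hwS, hwVt, hwx⟩ := hw
  rw [Set.mem_singleton_iff] at hwx
  have hTw : ∃ T ∈ relSH Vt sh2, T ⊆ A ∪ B ∧ (T ∩ (Vt \ {x})).Nonempty := by
    rcases hwS with hwA | hwB
    · obtain ⟨T, hT, hwT, _, hTS⟩ :=
        exT h12 hA1 Set.subset_union_left hwA hwVt hwA
      exact ⟨T, hT, hTS, ⟨w, hwT, hwVt, hwx⟩⟩
    · obtain ⟨T, hT, hwT, _, hTS⟩ :=
        exT h12 hB1 Set.subset_union_right hwB hwVt hwB
      exact ⟨T, hT, hTS, ⟨w, hwT, hwVt, hwx⟩⟩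
  have hXx : ∃ X ∈ relSH {x} sh2, X ⊆ A ∪ B := by
    obtain ⟨X, hX, _, _, hXS⟩ := exX h12 hA1 Set.subset_union_left hxA hxA
    exact ⟨X, hX, hXS⟩
  have cross : ∀ p ∈ A, ∀ q ∈ B,
      ∃ U ∈ nrelSH ({x} ∪ Vt) sh2 ∪
        relSH (Vt \ {x}) (binSH (relSH {x} sh2) (relSH Vt sh2)),
        p ∈ U ∧ q ∈ U ∧ U ⊆ A ∪ B := by
    intro p hpA q hqB
    by_cases hvB : ∃ v, v ∈ B ∩ Vt ∧ v ≠ x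
    · obtain ⟨v, ⟨hvB, hvVt⟩, hvx⟩ := hvB
      obtain ⟨T, hT, hqT, hvT, hTS⟩ :=
        exT h12 hB1 Set.subset_union_right hvB hvVt hqB
      obtain ⟨X, hX, hpX, _, hXS⟩ := exX h12 hA1 Set.subset_union_left hxA hpA
      exact mkU hX hT hXS hTS ⟨v, Or.inr hvT, hvVt, hvx⟩ (Or.inl hpX) (Or.inr hqT)
    · push_neg at hvB
      obtain ⟨v0, hv0B, hv0Vt⟩ := hBVt
      have hxB : x ∈ B := hvB v0 ⟨hv0B, hv0Vt⟩ ▸ hv0B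
      have hwA : w ∈ A := by
        rcases hwS with h | h
        · exact h
        · exact absurd (hvB w ⟨h, hwVt⟩) hwx
      obtain ⟨X, hX, hqX, _, hXS⟩ := exX h12 hB1 Set.subset_union_right hxB hqB
      obtain ⟨T, hT, hpT, hwT, hTS⟩ :=
        exT h12 hA1 Set.subset_union_left hwA hwVt hpA
      exact mkU hX hT hXS hTS ⟨w, Or.inr hwT, hwVt, hwx⟩ (Or.inr hpT) (Or.inl hqX)
  refine mem_rho_of_pairs hSG (fun p hp q hq => ?_)
  rcases hp with hpA | hpB <;> rcases hq with hqA | hqB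
  · exact sameHome h12 hA1 Set.subset_union_left subset_rfl subset_rfl hXx hTw hpA hqA
  · exact cross p hpA q hqB
  · obtain ⟨U, hU, hqU, hpU, hUS⟩ := cross q hqA p hpB
    exact ⟨U, hU, hpU, hqU, hUS⟩
  · exact sameHome h12 hB1 Set.subset_union_right subset_rfl subset_rfl hXx hTw hpB hqB


lemma rel_sub_star {sh : Set (Set Vr)} (hsg : sh ⊆ SG VI) (V : Set Vr) :
    relSH V sh ⊆ starSH VI (relSH V sh) :=
  fun W hW => star_single hW (hsg (mem_relSH.mp hW).1)

lemma starX_transfer (hVI : VI.Finite) (h12 : sh1 ⊆ rhoPSDsh VI sh2) {A : Set Vr}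
    (hA : A ∈ starSH VI (relSH {x} sh1)) : A ∈ starSH VI (relSH {x} sh2) := by
  obtain ⟨hSG, F, _, _, hsub, hU⟩ := hA
  refine star_of_cover hVI hSG (fun a ha => ?_)
  obtain ⟨P, hPF, haP⟩ := (hU ▸ ha : a ∈ ⋃₀ F)
  have hP := hsub hPF
  obtain ⟨W, hW, hxW, haW, hWP⟩ :=
    cover h12 (mem_relSH.mp hP).1 (mem_of_relx hP) haP
  exact ⟨W, mem_relSH.mpr ⟨hW, x, hxW, rfl⟩, haW,
    hWP.trans (hU ▸ Set.subset_sUnion_of_mem hPF)⟩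

lemma starT_transfer (hVI : VI.Finite) (h12 : sh1 ⊆ rhoPSDsh VI sh2) {B : Set Vr}
    (hB : B ∈ starSH VI (relSH Vt sh1)) : B ∈ starSH VI (relSH Vt sh2) := by
  obtain ⟨hSG, F, _, _, hsub, hU⟩ := hB
  refine star_of_cover hVI hSG (fun a ha => ?_)
  obtain ⟨P, hPF, haP⟩ := (hU ▸ ha : a ∈ ⋃₀ F)
  have hP := hsub hPF
  obtain ⟨v, hvP, hvVt⟩ := (mem_relSH.mp hP).2
  obtain ⟨W, hW, hvW, haW, hWP⟩ := cover h12 (mem_relSH.mp hP).1 hvP haP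
  exact ⟨W, mem_relSH.mpr ⟨hW, v, hvW, hvVt⟩, haW,
    hWP.trans (hU ▸ Set.subset_sUnion_of_mem hPF)⟩

/-- Key lemma, `lin x` case: `sh'' = bin(sh_x*, sh_t)`. -/
lemma key_LX (hVI : VI.Finite) (hsg1 : sh1 ⊆ SG VI) (hsg2 : sh2 ⊆ SG VI)
    (h12 : sh1 ⊆ rhoPSDsh VI sh2)
    (hS : S ∈ binSH (starSH VI (relSH {x} sh1)) (relSH Vt sh1))
    (hw : (S ∩ (Vt \ {x})).Nonempty) :
    S ∈ rhoPSDsh VI (nrelSH ({x} ∪ Vt) sh2 ∪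
      relSH (Vt \ {x}) (binSH (starSH VI (relSH {x} sh2)) (relSH Vt sh2))) := by
  obtain ⟨A, hA, B, hB, rfl⟩ := hS
  have hA2 : A ∈ starSH VI (relSH {x} sh2) := starX_transfer hVI h12 hA
  have homesA : ∀ a ∈ A, ∃ P ∈ sh1, a ∈ P ∧ P ⊆ A ∧ x ∈ P := by
    intro a ha
    obtain ⟨_, F, _, _, hsub, hU⟩ := hA
    obtain ⟨P, hPF, haP⟩ := (hU ▸ ha : a ∈ ⋃₀ F)
    exact ⟨P, (mem_relSH.mp (hsub hPF)).1, haP,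
      hU ▸ Set.subset_sUnion_of_mem hPF, mem_of_relx (hsub hPF)⟩
  have hxA : x ∈ A := mem_of_starx hA
  have hB1 : B ∈ sh1 := (mem_relSH.mp hB).1
  have hBVt : (B ∩ Vt).Nonempty := (mem_relSH.mp hB).2
  have hSG : A ∪ B ∈ SG VI := by
    refine ⟨Set.union_subset hA.1.1 (hsg1 hB1).1, ?_⟩
    exact Set.nonempty_iff_ne_empty.mp ⟨x, Or.inl hxA⟩
  obtain ⟨w, hwS, hwVt, hwx⟩ := hw
  rw [Set.mem_singleton_iff] at hwx
  have hTw : ∃ T ∈ relSH Vt sh2, T ⊆ A ∪ B ∧ (T ∩ (Vt \ {x})).Nonempty := by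
    rcases hwS with hwA | hwB
    · obtain ⟨P, hP1, hwP, hPA, _⟩ := homesA w hwA
      obtain ⟨T, hT, hwT, _, hTS⟩ :=
        exT h12 hP1 (hPA.trans Set.subset_union_left) hwP hwVt hwP
      exact ⟨T, hT, hTS, ⟨w, hwT, hwVt, hwx⟩⟩
    · obtain ⟨T, hT, hwT, _, hTS⟩ :=
        exT h12 hB1 Set.subset_union_right hwB hwVt hwB
      exact ⟨T, hT, hTS, ⟨w, hwT, hwVt, hwx⟩⟩
  have hXx : ∃ X ∈ relSH {x} sh2, X ⊆ A ∪ B := by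
    obtain ⟨P, hP1, hxP, hPA, _⟩ := homesA x hxA
    obtain ⟨X, hX, _, _, hXS⟩ :=
      exX h12 hP1 (hPA.trans Set.subset_union_left) hxP hxP
    exact ⟨X, hX, hXS⟩
  have cross : ∀ p ∈ A ∪ B, ∀ q ∈ B,
      ∃ U ∈ nrelSH ({x} ∪ Vt) sh2 ∪
        relSH (Vt \ {x}) (binSH (starSH VI (relSH {x} sh2)) (relSH Vt sh2)),
        p ∈ U ∧ q ∈ U ∧ U ⊆ A ∪ B := by
    intro p hp q hqB
    rcases hp with hpA | hpB
    · by_cases hvB : ∃ v, v ∈ B ∩ Vt ∧ v ≠ x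
      · obtain ⟨v, ⟨hvB', hvVt⟩, hvx⟩ := hvB
        obtain ⟨T, hT, hqT, hvT, hTS⟩ :=
          exT h12 hB1 Set.subset_union_right hvB' hvVt hqB
        exact mkU hA2 hT Set.subset_union_left hTS
          ⟨v, Or.inr hvT, hvVt, hvx⟩ (Or.inl hpA) (Or.inr hqT)
      · obtain ⟨v0, hv0B, hv0Vt⟩ := hBVt
        have hwA : w ∈ A := by
          rcases hwS with h | h
          · exact h
          · exact absurd rfl (by push_neg at hvB; exact (hvB w ⟨h, hwVt⟩ ▸ hwx))
        obtain ⟨T, hT, hqT, _, hTS⟩ :=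
          exT h12 hB1 Set.subset_union_right hv0B hv0Vt hqB
        exact mkU hA2 hT Set.subset_union_left hTS
          ⟨w, Or.inl hwA, hwVt, hwx⟩ (Or.inl hpA) (Or.inr hqT)
    · -- p, q ∈ B : same home B, but with star on the left available
      obtain ⟨W, hW, hpW, hqW, hWB⟩ := cover h12 hB1 hpB hqB
      by_cases hxW : x ∈ W
      · obtain ⟨T, hT, hTS, hTwit⟩ := hTw
        exact mkU (star_union_single hA2 (mem_relSH.mpr ⟨hW, x, hxW, rfl⟩)
          (hsg2 hW).1) hT
          (Set.union_subset Set.subset_union_left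
            (hWB.trans Set.subset_union_right)) hTS
          (hTwit.mono (Set.inter_subset_inter_left _ Set.subset_union_right))
          (Or.inl (Or.inr hpW)) (Or.inl (Or.inr hqW))
      · by_cases hWVt : (W ∩ Vt).Nonempty
        · obtain ⟨X, hX, hXS⟩ := hXx
          exact mkU (star_single hX (hsg2 (mem_relSH.mp hX).1))
            (mem_relSH.mpr ⟨hW, hWVt⟩) hXS
            (hWB.trans Set.subset_union_right)
            ((witness_of_xnotmem hxW hWVt).mono
              (Set.inter_subset_inter_left _ Set.subset_union_right))
            (Or.inr hpW) (Or.inr hqW)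
        · exact mkM hW (disj_of_cases hxW hWVt)
            (hWB.trans Set.subset_union_right) hpW hqW
  refine mem_rho_of_pairs hSG (fun p hp q hq => ?_)
  rcases hq with hqA | hqB
  · rcases hp with hpA | hpB
    · obtain ⟨T, hT, hTS, hTwit⟩ := hTw
      exact mkU hA2 hT Set.subset_union_left hTS
        (hTwit.mono (Set.inter_subset_inter_left _ Set.subset_union_right))
        (Or.inl hpA) (Or.inl hqA)
    · obtain ⟨U, hU, hqU, hpU, hUS⟩ := cross q (Or.inl hqA) p hpB
      exact ⟨U, hU, hpU, hqU, hUS⟩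
  · exact cross p hp q hqB

/-- Key lemma, `lin t` case: `sh'' = bin(sh_x, sh_t*)`. -/
lemma key_LT (hVI : VI.Finite) (hsg1 : sh1 ⊆ SG VI) (hsg2 : sh2 ⊆ SG VI)
    (h12 : sh1 ⊆ rhoPSDsh VI sh2)
    (hS : S ∈ binSH (relSH {x} sh1) (starSH VI (relSH Vt sh1)))
    (hw : (S ∩ (Vt \ {x})).Nonempty) :
    S ∈ rhoPSDsh VI (nrelSH ({x} ∪ Vt) sh2 ∪
      relSH (Vt \ {x}) (binSH (relSH {x} sh2) (starSH VI (relSH Vt sh2)))) := by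
  obtain ⟨A, hA, B, hB, rfl⟩ := hS
  have hA1 : A ∈ sh1 := (mem_relSH.mp hA).1
  have hxA : x ∈ A := mem_of_relx hA
  have hB2 : B ∈ starSH VI (relSH Vt sh2) := starT_transfer hVI h12 hB
  have homesB : ∀ b ∈ B, ∃ Q ∈ sh1, b ∈ Q ∧ Q ⊆ B ∧ (Q ∩ Vt).Nonempty := by
    intro b hb
    obtain ⟨_, F, _, _, hsub, hU⟩ := hB
    obtain ⟨Q, hQF, hbQ⟩ := (hU ▸ hb : b ∈ ⋃₀ F)
    exact ⟨Q, (mem_relSH.mp (hsub hQF)).1, hbQ,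
      hU ▸ Set.subset_sUnion_of_mem hQF, (mem_relSH.mp (hsub hQF)).2⟩
  have hSG : A ∪ B ∈ SG VI := by
    refine ⟨Set.union_subset (hsg1 hA1).1 hB.1.1, ?_⟩
    exact Set.nonempty_iff_ne_empty.mp ⟨x, Or.inl hxA⟩
  obtain ⟨w, hwS, hwVt, hwx⟩ := hw
  rw [Set.mem_singleton_iff] at hwx
  have hTw : ∃ T ∈ relSH Vt sh2, T ⊆ A ∪ B ∧ w ∈ T := by
    rcases hwS with hwA | hwB
    · obtain ⟨T, hT, hwT, _, hTS⟩ :=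
        exT h12 hA1 Set.subset_union_left hwA hwVt hwA
      exact ⟨T, hT, hTS, hwT⟩
    · obtain ⟨Q, hQ1, hwQ, hQB, _⟩ := homesB w hwB
      obtain ⟨T, hT, hwT, _, hTS⟩ :=
        exT h12 hQ1 (hQB.trans Set.subset_union_right) hwQ hwVt hwQ
      exact ⟨T, hT, hTS, hwT⟩
  obtain ⟨Tw, hTwmem, hTwS, hwTw⟩ := hTw
  have hBTw : B ∪ Tw ∈ starSH VI (relSH Vt sh2) :=
    star_union_single hB2 hTwmem (hsg2 (mem_relSH.mp hTwmem).1).1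
  have hBTwS : B ∪ Tw ⊆ A ∪ B :=
    Set.union_subset Set.subset_union_right hTwS
  have hwit : ((B ∪ Tw) ∩ (Vt \ {x})).Nonempty := ⟨w, Or.inr hwTw, hwVt, hwx⟩
  have hXx : ∃ X ∈ relSH {x} sh2, X ⊆ A ∪ B := by
    obtain ⟨X, hX, _, _, hXS⟩ := exX h12 hA1 Set.subset_union_left hxA hxA
    exact ⟨X, hX, hXS⟩
  refine mem_rho_of_pairs hSG (fun p hp q hq => ?_)
  have crossq : ∀ p ∈ A ∪ B, ∀ r ∈ B,
      ∃ U ∈ nrelSH ({x} ∪ Vt) sh2 ∪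
        relSH (Vt \ {x}) (binSH (relSH {x} sh2) (starSH VI (relSH Vt sh2))),
        p ∈ U ∧ r ∈ U ∧ U ⊆ A ∪ B := by
    intro p hp r hrB
    rcases hp with hpA | hpB
    · obtain ⟨X, hX, hpX, _, hXS⟩ := exX h12 hA1 Set.subset_union_left hxA hpA
      exact mkU hX hBTw hXS hBTwS
        (hwit.mono (Set.inter_subset_inter_left _ Set.subset_union_right))
        (Or.inl hpX) (Or.inr (Or.inl hrB))
    · obtain ⟨X, hX, hXS⟩ := hXx
      exact mkU hX hBTw hXS hBTwS
        (hwit.mono (Set.inter_subset_inter_left _ Set.subset_union_right))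
        (Or.inr (Or.inl hpB)) (Or.inr (Or.inl hrB))
  rcases hq with hqA | hqB
  · rcases hp with hpA | hpB
    · -- both in A : same home, with star on the right available
      exact sameHome h12 hA1 Set.subset_union_left subset_rfl
        (rel_sub_star hsg2 Vt) hXx
        ⟨Tw, hTwmem, hTwS, ⟨w, hwTw, hwVt, hwx⟩⟩ hpA hqA
    · obtain ⟨U, hU, hqU, hpU, hUS⟩ := crossq q (Or.inl hqA) p hpB
      exact ⟨U, hU, hpU, hqU, hUS⟩
  · exact crossq p hp q hqB

/-- Key lemma, general case: `sh'' = bin(sh_x*, sh_t*)`. -/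
lemma key_G (hVI : VI.Finite) (h12 : sh1 ⊆ rhoPSDsh VI sh2)
    (hS : S ∈ binSH (starSH VI (relSH {x} sh1)) (starSH VI (relSH Vt sh1)))
    (hw : (S ∩ (Vt \ {x})).Nonempty) :
    S ∈ rhoPSDsh VI (nrelSH ({x} ∪ Vt) sh2 ∪
      relSH (Vt \ {x}) (binSH (starSH VI (relSH {x} sh2))
        (starSH VI (relSH Vt sh2)))) := by
  obtain ⟨A, hA, B, hB, rfl⟩ := hS
  have hSmem : A ∪ B ∈ binSH (starSH VI (relSH {x} sh2))
      (starSH VI (relSH Vt sh2)) :=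
    ⟨A, starX_transfer hVI h12 hA, B, starT_transfer hVI h12 hB, rfl⟩
  have hSG : A ∪ B ∈ SG VI := by
    refine ⟨Set.union_subset hA.1.1 hB.1.1, ?_⟩
    exact Set.nonempty_iff_ne_empty.mp
      ((SG_nonempty hA.1).mono Set.subset_union_left)
  refine mem_rho_of_pairs hSG (fun p hp q hq => ?_)
  exact ⟨A ∪ B, Or.inr (mem_relSH.mpr ⟨hSmem,
    by rwa [Set.nonempty_iff_ne_empty] at hw ⊢⟩), hp, hq, subset_rfl⟩


/-- Key lemma, `lin x ∧ lin t` case. -/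
lemma key_LL (hVI : VI.Finite) (hsg1 : sh1 ⊆ SG VI) (hsg2 : sh2 ⊆ SG VI)
    (h12 : sh1 ⊆ rhoPSDsh VI sh2)
    (hS : S ∈ binSH
      (relSH {x} sh1 ∪ binSH (relSH {x} sh1)
        (starSH VI (relSH {x} sh1 ∩ relSH Vt sh1)))
      (relSH Vt sh1 ∪ binSH (relSH Vt sh1)
        (starSH VI (relSH {x} sh1 ∩ relSH Vt sh1))))
    (hw : (S ∩ (Vt \ {x})).Nonempty) :
    S ∈ rhoPSDsh VI (nrelSH ({x} ∪ Vt) sh2 ∪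
      relSH (Vt \ {x}) (binSH
        (relSH {x} sh2 ∪ binSH (relSH {x} sh2)
          (starSH VI (relSH {x} sh2 ∩ relSH Vt sh2)))
        (relSH Vt sh2 ∪ binSH (relSH Vt sh2)
          (starSH VI (relSH {x} sh2 ∩ relSH Vt sh2))))) := by
  obtain ⟨A, hA, B, hB, rfl⟩ := hS
  have hAside : ∃ A0 ∈ sh1, x ∈ A0 ∧ A0 ⊆ A ∧ A ⊆ VI ∧
      ∀ a ∈ A, ∃ G ∈ sh1, a ∈ G ∧ G ⊆ A ∧
        (G = A0 ∨ (x ∈ G ∧ (G ∩ Vt).Nonempty)) := by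
    rcases hA with hA | ⟨A0, hA0, E, hE, rfl⟩
    · exact ⟨A, (mem_relSH.mp hA).1, mem_of_relx hA, subset_rfl,
        (hsg1 (mem_relSH.mp hA).1).1,
        fun a ha => ⟨A, (mem_relSH.mp hA).1, ha, subset_rfl, Or.inl rfl⟩⟩
    · refine ⟨A0, (mem_relSH.mp hA0).1, mem_of_relx hA0, Set.subset_union_left,
        Set.union_subset (hsg1 (mem_relSH.mp hA0).1).1 hE.1.1, ?_⟩
      intro a ha
      rcases ha with haA0 | haE
      · exact ⟨A0, (mem_relSH.mp hA0).1, haA0, Set.subset_union_left, Or.inl rfl⟩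
      · obtain ⟨_, F, _, _, hsub, hU⟩ := hE
        obtain ⟨P, hPF, haP⟩ := (hU ▸ haE : a ∈ ⋃₀ F)
        have hP := hsub hPF
        exact ⟨P, (mem_relSH.mp hP.1).1, haP,
          (hU ▸ Set.subset_sUnion_of_mem hPF).trans Set.subset_union_right,
          Or.inr ⟨mem_of_relx hP.1, (mem_relSH.mp hP.2).2⟩⟩
  have hBside : ∃ B0 ∈ sh1, (B0 ∩ Vt).Nonempty ∧ B0 ⊆ B ∧ B ⊆ VI ∧
      ∀ b ∈ B, ∃ G ∈ sh1, b ∈ G ∧ G ⊆ B ∧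
        (G = B0 ∨ (x ∈ G ∧ (G ∩ Vt).Nonempty)) := by
    rcases hB with hB | ⟨B0, hB0, F0, hF0, rfl⟩
    · exact ⟨B, (mem_relSH.mp hB).1, (mem_relSH.mp hB).2, subset_rfl,
        (hsg1 (mem_relSH.mp hB).1).1,
        fun b hb => ⟨B, (mem_relSH.mp hB).1, hb, subset_rfl, Or.inl rfl⟩⟩
    · refine ⟨B0, (mem_relSH.mp hB0).1, (mem_relSH.mp hB0).2,
        Set.subset_union_left,
        Set.union_subset (hsg1 (mem_relSH.mp hB0).1).1 hF0.1.1, ?_⟩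
      intro b hb
      rcases hb with hbB0 | hbF
      · exact ⟨B0, (mem_relSH.mp hB0).1, hbB0, Set.subset_union_left, Or.inl rfl⟩
      · obtain ⟨_, F, _, _, hsub, hU⟩ := hF0
        obtain ⟨P, hPF, hbP⟩ := (hU ▸ hbF : b ∈ ⋃₀ F)
        have hP := hsub hPF
        exact ⟨P, (mem_relSH.mp hP.1).1, hbP,
          (hU ▸ Set.subset_sUnion_of_mem hPF).trans Set.subset_union_right,
          Or.inr ⟨mem_of_relx hP.1, (mem_relSH.mp hP.2).2⟩⟩
  obtain ⟨A0, hA01, hxA0, hA0A, hAVI, homesA⟩ := hAside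
  obtain ⟨B0, hB01, hB0Vt, hB0B, hBVI, homesB⟩ := hBside
  have hA0S : A0 ⊆ A ∪ B := hA0A.trans Set.subset_union_left
  have hB0S : B0 ⊆ A ∪ B := hB0B.trans Set.subset_union_right
  have homes : ∀ r ∈ A ∪ B, ∃ G ∈ sh1, r ∈ G ∧ G ⊆ A ∪ B ∧
      (G = A0 ∨ G = B0 ∨ (x ∈ G ∧ (G ∩ Vt).Nonempty)) := by
    intro r hr
    rcases hr with hrA | hrB
    · obtain ⟨G, hG1, hrG, hGA, htype⟩ := homesA r hrA
      exact ⟨G, hG1, hrG, hGA.trans Set.subset_union_left,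
        htype.imp id Or.inr⟩
    · obtain ⟨G, hG1, hrG, hGB, htype⟩ := homesB r hrB
      exact ⟨G, hG1, hrG, hGB.trans Set.subset_union_right,
        Or.inr htype⟩
  have hSG : A ∪ B ∈ SG VI := by
    refine ⟨Set.union_subset hAVI hBVI, ?_⟩
    exact Set.nonempty_iff_ne_empty.mp ⟨x, Or.inl (hA0A hxA0)⟩
  obtain ⟨w, hwS, hwVt, hwx⟩ := hw
  rw [Set.mem_singleton_iff] at hwx
  have hTw : ∃ T ∈ relSH Vt sh2, T ⊆ A ∪ B ∧ (T ∩ (Vt \ {x})).Nonempty := by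
    obtain ⟨G, hG1, hwG, hGS, _⟩ := homes w hwS
    obtain ⟨T, hT, hwT, _, hTS⟩ := exT h12 hG1 hGS hwG hwVt hwG
    exact ⟨T, hT, hTS, ⟨w, hwT, hwVt, hwx⟩⟩
  have hXx : ∃ X ∈ relSH {x} sh2, X ⊆ A ∪ B := by
    obtain ⟨X, hX, _, _, hXS⟩ := exX h12 hA01 hA0S hxA0 hxA0
    exact ⟨X, hX, hXS⟩
  refine mem_rho_of_pairs hSG (fun p hp q hq => ?_)
  obtain ⟨Gp, hGp1, hpGp, hGpS, htypep⟩ := homes p hp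
  obtain ⟨Gq, hGq1, hqGq, hGqS, htypeq⟩ := homes q hq
  have crossXT : ∀ G ∈ sh1, ∀ H ∈ sh1, G ⊆ A ∪ B → H ⊆ A ∪ B →
      ∀ r ∈ G, ∀ s ∈ H, x ∈ G → ∀ v, v ∈ H ∩ Vt → v ≠ x →
      ∃ U ∈ nrelSH ({x} ∪ Vt) sh2 ∪
        relSH (Vt \ {x}) (binSH
          (relSH {x} sh2 ∪ binSH (relSH {x} sh2)
            (starSH VI (relSH {x} sh2 ∩ relSH Vt sh2)))
          (relSH Vt sh2 ∪ binSH (relSH Vt sh2)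
            (starSH VI (relSH {x} sh2 ∩ relSH Vt sh2)))),
        r ∈ U ∧ s ∈ U ∧ U ⊆ A ∪ B := by
    intro G hG1 H hH1 hGS hHS r hrG s hsH hxG v hv hvx
    obtain ⟨X, hX, hrX, _, hXS⟩ := exX h12 hG1 hGS hxG hrG
    obtain ⟨T, hT, hsT, hvT, hTS⟩ := exT h12 hH1 hHS hv.1 hv.2 hsH
    exact mkU (Or.inl hX) (Or.inl hT) hXS hTS
      ⟨v, Or.inr hvT, hv.2, hvx⟩ (Or.inl hrX) (Or.inr hsT)
  by_cases hxp : x ∈ Gp <;> by_cases hxq : x ∈ Gq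
  · -- both homes contain x
    by_cases h1 : ∃ v, v ∈ Gp ∩ Vt ∧ v ≠ x
    · obtain ⟨v, hv, hvx⟩ := h1
      obtain ⟨U, hU, hqU, hpU, hUS⟩ :=
        crossXT Gq hGq1 Gp hGp1 hGqS hGpS q hqGq p hpGp hxq v hv hvx
      exact ⟨U, hU, hpU, hqU, hUS⟩
    · by_cases h2 : ∃ v, v ∈ Gq ∩ Vt ∧ v ≠ x
      · obtain ⟨v, hv, hvx⟩ := h2
        exact crossXT Gp hGp1 Gq hGq1 hGpS hGqS p hpGp q hqGq hxp v hv hvx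
      · by_cases hxVt : x ∈ Vt
        · obtain ⟨Xp, hXp, hpXp, _, hXpS⟩ := exX h12 hGp1 hGpS hxp hpGp
          obtain ⟨Xq, hXq, hqXq, hxXq, hXqS⟩ := exX h12 hGq1 hGqS hxq hqGq
          have hXqxt : Xq ∈ relSH {x} sh2 ∩ relSH Vt sh2 :=
            ⟨hXq, mem_relSH.mpr ⟨(mem_relSH.mp hXq).1, x, hxXq, hxVt⟩⟩
          have hL : Xp ∪ Xq ∈ relSH {x} sh2 ∪ binSH (relSH {x} sh2)
              (starSH VI (relSH {x} sh2 ∩ relSH Vt sh2)) :=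
            Or.inr ⟨Xp, hXp, Xq,
              star_single hXqxt (hsg2 (mem_relSH.mp hXq).1), rfl⟩
          obtain ⟨T, hT, hTS, hTwit⟩ := hTw
          exact mkU hL (Or.inl hT) (Set.union_subset hXpS hXqS) hTS
            (hTwit.mono (Set.inter_subset_inter_left _ Set.subset_union_right))
            (Or.inl (Or.inl hpXp)) (Or.inl (Or.inr hqXq))
        · push_neg at h1 h2
          have hGA0 : ∀ G, x ∈ G → (∀ v, v ∈ G ∩ Vt → v = x) →
              (G = A0 ∨ G = B0 ∨ (x ∈ G ∧ (G ∩ Vt).Nonempty)) → G = A0 := by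
            intro G _ hall htype
            rcases htype with h | h | h
            · exact h
            · exfalso
              obtain ⟨v, hv1, hv2⟩ := hB0Vt
              exact hxVt ((hall v (by rw [h]; exact ⟨hv1, hv2⟩)) ▸ hv2)
            · exfalso
              obtain ⟨v, hv⟩ := h.2
              exact hxVt ((hall v hv) ▸ hv.2)
          have hp' : p ∈ A0 := (hGA0 Gp hxp h1 htypep) ▸ hpGp
          have hq' : q ∈ A0 := (hGA0 Gq hxq h2 htypeq) ▸ hqGq
          exact sameHome h12 hA01 hA0S Set.subset_union_left
            Set.subset_union_left hXx hTw hp' hq'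
  · -- x ∈ Gp, x ∉ Gq : Gq = B0
    have hGqB0 : Gq = B0 := by
      rcases htypeq with h | h | h
      · exact absurd (h ▸ hxA0 : x ∈ Gq) hxq
      · exact h
      · exact absurd h.1 hxq
    obtain ⟨v, hv1, hv2⟩ := hB0Vt
    have hvx : v ≠ x := fun h => hxq (hGqB0 ▸ (h ▸ hv1))
    exact crossXT Gp hGp1 B0 hB01 hGpS hB0S p hpGp q (hGqB0 ▸ hqGq) hxp v
      ⟨hv1, hv2⟩ hvx
  · -- x ∉ Gp, x ∈ Gq : Gp = B0
    have hGpB0 : Gp = B0 := by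
      rcases htypep with h | h | h
      · exact absurd (h ▸ hxA0 : x ∈ Gp) hxp
      · exact h
      · exact absurd h.1 hxp
    obtain ⟨v, hv1, hv2⟩ := hB0Vt
    have hvx : v ≠ x := fun h => hxp (hGpB0 ▸ (h ▸ hv1))
    obtain ⟨U, hU, hqU, hpU, hUS⟩ :=
      crossXT Gq hGq1 B0 hB01 hGqS hB0S q hqGq p (hGpB0 ▸ hpGp) hxq v
        ⟨hv1, hv2⟩ hvx
    exact ⟨U, hU, hpU, hqU, hUS⟩
  · -- x ∉ Gp, x ∉ Gq : both are B0
    have hGpB0 : Gp = B0 := by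
      rcases htypep with h | h | h
      · exact absurd (h ▸ hxA0 : x ∈ Gp) hxp
      · exact h
      · exact absurd h.1 hxp
    have hGqB0 : Gq = B0 := by
      rcases htypeq with h | h | h
      · exact absurd (h ▸ hxA0 : x ∈ Gq) hxq
      · exact h
      · exact absurd h.1 hxq
    exact sameHome h12 hB01 hB0S Set.subset_union_left Set.subset_union_left
      hXx hTw (hGpB0 ▸ hpGp) (hGqB0 ▸ hqGq)

end Keys


section Assemble

variable {Sig : Type} {ar : Sig → ℕ}

lemma sh_congr_dir {sh1 sh2 : Set (Set Vr)} {x : Vr} {t : HTerm Sig ar Vr}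
    {L1 R1 L2 R2 : Set (Set Vr)}
    (hsg1 : sh1 ⊆ SG VI) (h12 : sh1 ⊆ rhoPSDsh VI sh2)
    (hx1 : ∀ W ∈ L1, x ∈ W)
    (hK : ∀ S ∈ binSH L1 R1, (S ∩ (t.vars \ {x})).Nonempty →
      S ∈ rhoPSDsh VI (nrelSH ({x} ∪ t.vars) sh2 ∪
        relSH (t.vars \ {x}) (binSH L2 R2))) :
    cyclicSH x t (nrelSH ({x} ∪ t.vars) sh1 ∪ binSH L1 R1) ⊆
      rhoPSDsh VI (cyclicSH x t (nrelSH ({x} ∪ t.vars) sh2 ∪ binSH L2 R2)) := by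
  have hsub : nrelSH ({x} ∪ t.vars) sh2 ∪
      relSH (t.vars \ {x}) (binSH L2 R2) ⊆
      cyclicSH x t (nrelSH ({x} ∪ t.vars) sh2 ∪ binSH L2 R2) := by
    intro U hU
    rcases hU with hU | hU
    · exact Or.inl (mem_nrelSH.mpr
        ⟨Or.inl hU, (mem_nrelSH.mp hU).2⟩)
    · exact Or.inr (mem_relSH.mpr
        ⟨Or.inr (mem_relSH.mp hU).1, (mem_relSH.mp hU).2⟩)
  intro S hS
  rcases hS with hS | hS
  · obtain ⟨hmem, hdis⟩ := mem_nrelSH.mp hS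
    rcases hmem with hm | hb
    · -- S is an irrelevant group of sh1
      have hS1 : S ∈ sh1 := (mem_nrelSH.mp hm).1
      refine mem_rho_of_pairs (hsg1 hS1) (fun p hp q hq => ?_)
      obtain ⟨W, hW, hpW, hqW, hWS⟩ := cover h12 hS1 hp hq
      have hWdis : W ∩ ({x} ∪ t.vars) = ∅ :=
        Set.subset_empty_iff.mp (hdis ▸ Set.inter_subset_inter_left _ hWS)
      exact ⟨W, hsub (Or.inl (mem_nrelSH.mpr ⟨hW, hWdis⟩)), hpW, hqW, hWS⟩
    · -- impossible : bin elements contain x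
      exfalso
      obtain ⟨X, hX, T, hT, rfl⟩ := hb
      have : x ∈ (X ∪ T) ∩ ({x} ∪ t.vars) :=
        ⟨Or.inl (hx1 X hX), Or.inl rfl⟩
      exact absurd (hdis ▸ this) (Set.notMem_empty x)
  · obtain ⟨hmem, hwit⟩ := mem_relSH.mp hS
    rcases hmem with hm | hb
    · exfalso
      obtain ⟨a, haS, haVt, _⟩ := hwit
      have : a ∈ S ∩ ({x} ∪ t.vars) := ⟨haS, Or.inr haVt⟩
      exact absurd ((mem_nrelSH.mp hm).2 ▸ this) (Set.notMem_empty a)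
    · exact rho_mono hsub (hK S hb hwit)

variable {d1 d2 : SFLElem Vr}

lemma free_iff (hf : d1.f = d2.f) (s : HTerm Sig ar Vr) :
    freeD d1 s ↔ freeD d2 s := by simp [freeD, hf]

lemma ground_iff (h12 : d1.sh ⊆ rhoPSDsh VI d2.sh)
    (h21 : d2.sh ⊆ rhoPSDsh VI d1.sh) (s : HTerm Sig ar Vr) :
    groundD VI d1 s ↔ groundD VI d2 s := by
  unfold groundD
  rw [Set.Subset.antisymm (sUnion_sub h12) (sUnion_sub h21)]

lemma ind_iff (h12 : d1.sh ⊆ rhoPSDsh VI d2.sh)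
    (h21 : d2.sh ⊆ rhoPSDsh VI d1.sh) (y z : Vr) :
    indD d1 (HTerm.var y : HTerm Sig ar Vr) (HTerm.var z) ↔
      indD d2 (HTerm.var y : HTerm Sig ar Vr) (HTerm.var z) := by
  unfold indD
  have hv : ∀ u : Vr, (HTerm.var u : HTerm Sig ar Vr).vars = {u} := fun _ => rfl
  rw [hv, hv, rel_inter_rel_empty_iff, rel_inter_rel_empty_iff]
  exact not_congr ⟨pair_share h12, pair_share h21⟩

lemma occlin_iff (h12 : d1.sh ⊆ rhoPSDsh VI d2.sh)
    (h21 : d2.sh ⊆ rhoPSDsh VI d1.sh) (hl : d1.l = d2.l)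
    (y : Vr) (s : HTerm Sig ar Vr) :
    occlinD VI d1 y s ↔ occlinD VI d2 y s := by
  unfold occlinD
  refine or_congr (ground_iff h12 h21 _) (and_congr Iff.rfl
    (and_congr (by rw [hl]) (forall_congr' (fun z => ?_))))
  refine imp_congr Iff.rfl (imp_congr Iff.rfl ?_)
  exact ind_iff h12 h21 y z

lemma lin_iff (h12 : d1.sh ⊆ rhoPSDsh VI d2.sh)
    (h21 : d2.sh ⊆ rhoPSDsh VI d1.sh) (hl : d1.l = d2.l)
    (s : HTerm Sig ar Vr) : linD VI d1 s ↔ linD VI d2 s := by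
  unfold linD
  exact forall_congr' (fun y => imp_congr Iff.rfl (occlin_iff h12 h21 hl y s))

lemma shareWith_eq (h12 : d1.sh ⊆ rhoPSDsh VI d2.sh)
    (h21 : d2.sh ⊆ rhoPSDsh VI d1.sh) (s : HTerm Sig ar Vr) :
    shareWith d1 s = shareWith d2 s :=
  Set.Subset.antisymm (sUnion_rel_sub h12 _) (sUnion_rel_sub h21 _)

end Assemble


section Final

variable {Sig : Type} {ar : Sig → ℕ}

lemma amguCore_sh (VI : Set Vr) (d : SFLElem Vr) (x : Vr) (t : HTerm Sig ar Vr) :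
    (amguCore VI d x t).sh = cyclicSH x t (nrelSH ({x} ∪ t.vars) d.sh ∪
      (if freeD d (HTerm.var x : HTerm Sig ar Vr) ∨ freeD d t then
        binSH (relSH {x} d.sh) (relSH t.vars d.sh)
      else if linD VI d (HTerm.var x : HTerm Sig ar Vr) ∧ linD VI d t then
        binSH (relSH {x} d.sh ∪ binSH (relSH {x} d.sh)
            (starSH VI (relSH {x} d.sh ∩ relSH t.vars d.sh)))
          (relSH t.vars d.sh ∪ binSH (relSH t.vars d.sh)
            (starSH VI (relSH {x} d.sh ∩ relSH t.vars d.sh)))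
      else if linD VI d (HTerm.var x : HTerm Sig ar Vr) then
        binSH (starSH VI (relSH {x} d.sh)) (relSH t.vars d.sh)
      else if linD VI d t then
        binSH (relSH {x} d.sh) (starSH VI (relSH t.vars d.sh))
      else
        binSH (starSH VI (relSH {x} d.sh)) (starSH VI (relSH t.vars d.sh)))) :=
  rfl

lemma amguCore_f (VI : Set Vr) (d : SFLElem Vr) (x : Vr) (t : HTerm Sig ar Vr) :
    (amguCore VI d x t).f =
      (if freeD d (HTerm.var x : HTerm Sig ar Vr) ∧ freeD d t then d.f
      else if freeD d (HTerm.var x : HTerm Sig ar Vr) then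
        d.f \ shareWith d (HTerm.var x : HTerm Sig ar Vr)
      else if freeD d t then d.f \ shareWith d t
      else d.f \ (shareWith d (HTerm.var x : HTerm Sig ar Vr) ∪ shareWith d t)) :=
  rfl

lemma amguCore_l (VI : Set Vr) (d : SFLElem Vr) (x : Vr) (t : HTerm Sig ar Vr) :
    (amguCore VI d x t).l = (VI \ ⋃₀ (amguCore VI d x t).sh) ∪
      (amguCore VI d x t).f ∪
      (if linD VI d (HTerm.var x : HTerm Sig ar Vr) ∧ linD VI d t then
        d.l \ (shareWith d (HTerm.var x : HTerm Sig ar Vr) ∩ shareWith d t)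
      else if linD VI d (HTerm.var x : HTerm Sig ar Vr) then
        d.l \ shareWith d (HTerm.var x : HTerm Sig ar Vr)
      else if linD VI d t then d.l \ shareWith d t
      else d.l \ (shareWith d (HTerm.var x : HTerm Sig ar Vr) ∪ shareWith d t)) :=
  rfl

lemma cyclic_sub (x : Vr) (t : HTerm Sig ar Vr) (sh : Set (Set Vr)) :
    cyclicSH x t sh ⊆ sh := by
  rintro W (h | h)
  · exact (mem_nrelSH.mp h).1
  · exact (mem_relSH.mp h).1

lemma wf_amguCore {d : SFLElem Vr} (hwf : d.WF VI) (x : Vr)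
    (t : HTerm Sig ar Vr) : (amguCore VI d x t).WF VI := by
  obtain ⟨hsh, hf, hl⟩ := hwf
  have hx : relSH {x} d.sh ⊆ SG VI := fun W hW => hsh (mem_relSH.mp hW).1
  have ht : relSH t.vars d.sh ⊆ SG VI := fun W hW => hsh (mem_relSH.mp hW).1
  have hbin : ∀ L R : Set (Set Vr), L ⊆ SG VI → R ⊆ SG VI →
      binSH L R ⊆ SG VI := by
    rintro L R hL hR W ⟨X, hX, T, hT, rfl⟩
    refine ⟨Set.union_subset (hL hX).1 (hR hT).1, ?_⟩
    exact Set.nonempty_iff_ne_empty.mp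
      ((SG_nonempty (hL hX)).mono Set.subset_union_left)
  have hstar : ∀ s : Set (Set Vr), starSH VI s ⊆ SG VI := fun _ W hW => hW.1
  refine ⟨?_, ?_, ?_⟩
  · rw [amguCore_sh]
    intro W hW
    have hW' := cyclic_sub x t _ hW
    rcases hW' with h | h
    · exact hsh (mem_nrelSH.mp h).1
    · split_ifs at h
      · exact hbin _ _ hx ht h
      · refine hbin _ _ ?_ ?_ h
        · rintro W (h' | h')
          · exact hx h'
          · exact hbin _ _ hx (hstar _) h'
        · rintro W (h' | h')
          · exact ht h'
          · exact hbin _ _ ht (hstar _) h'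
      · exact hbin _ _ (hstar _) ht h
      · exact hbin _ _ hx (hstar _) h
      · exact hbin _ _ (hstar _) (hstar _) h
  · rw [amguCore_f]
    split_ifs
    · exact hf
    · exact Set.diff_subset.trans hf
    · exact Set.diff_subset.trans hf
    · exact Set.diff_subset.trans hf
  · rw [amguCore_l]
    refine Set.union_subset (Set.union_subset Set.diff_subset ?_) ?_
    · rw [amguCore_f]
      split_ifs
      · exact hf
      · exact Set.diff_subset.trans hf
      · exact Set.diff_subset.trans hf
      · exact Set.diff_subset.trans hf
    · split_ifs
      · exact Set.diff_subset.trans hl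
      · exact Set.diff_subset.trans hl
      · exact Set.diff_subset.trans hl
      · exact Set.diff_subset.trans hl

lemma wf_bot : (botS VI).WF VI :=
  ⟨by intro W hW; exact absurd hW (Set.notMem_empty W), subset_rfl, subset_rfl⟩

lemma wf_amguRT {d : SFLElem Vr} (hwf : d.WF VI) (x : Vr)
    (t : HTerm Sig ar Vr) : (amguRT VI d x t).WF VI := by
  unfold amguRT
  split_ifs
  · exact wf_bot
  · exact wf_amguCore hwf x t

lemma core_congr (hVI : VI.Finite) {d1 d2 : SFLElem Vr}
    (h1 : d1.WF VI) (h2 : d2.WF VI) (hf : d1.f = d2.f) (hl : d1.l = d2.l)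
    (h12 : d1.sh ⊆ rhoPSDsh VI d2.sh) (h21 : d2.sh ⊆ rhoPSDsh VI d1.sh)
    (x : Vr) (t : HTerm Sig ar Vr) :
    rhoPSD VI (amguCore VI d1 x t) = rhoPSD VI (amguCore VI d2 x t) := by
  have hsw_x := shareWith_eq h12 h21 (HTerm.var x : HTerm Sig ar Vr)
  have hsw_t := shareWith_eq h12 h21 t
  have hcF : (freeD d1 (HTerm.var x : HTerm Sig ar Vr) ∨ freeD d1 t) ↔
      (freeD d2 (HTerm.var x : HTerm Sig ar Vr) ∨ freeD d2 t) :=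
    or_congr (free_iff hf _) (free_iff hf _)
  have hcLX : linD VI d1 (HTerm.var x : HTerm Sig ar Vr) ↔
      linD VI d2 (HTerm.var x : HTerm Sig ar Vr) := lin_iff h12 h21 hl _
  have hcLT : linD VI d1 t ↔ linD VI d2 t := lin_iff h12 h21 hl t
  have hcLL : (linD VI d1 (HTerm.var x : HTerm Sig ar Vr) ∧ linD VI d1 t) ↔
      (linD VI d2 (HTerm.var x : HTerm Sig ar Vr) ∧ linD VI d2 t) :=
    and_congr hcLX hcLT
  -- the sharing component
  have hxRel : ∀ W ∈ relSH {x} d1.sh, x ∈ W := fun _ hW => mem_of_relx hW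
  have hxRel2 : ∀ W ∈ relSH {x} d2.sh, x ∈ W := fun _ hW => mem_of_relx hW
  have hxStar : ∀ W ∈ starSH VI (relSH {x} d1.sh), x ∈ W :=
    fun _ hW => mem_of_starx hW
  have hxStar2 : ∀ W ∈ starSH VI (relSH {x} d2.sh), x ∈ W :=
    fun _ hW => mem_of_starx hW
  have hxLL : ∀ W ∈ relSH {x} d1.sh ∪ binSH (relSH {x} d1.sh)
      (starSH VI (relSH {x} d1.sh ∩ relSH t.vars d1.sh)), x ∈ W := by
    rintro W (h | ⟨X, hX, E, _, rfl⟩)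
    · exact mem_of_relx h
    · exact Or.inl (mem_of_relx hX)
  have hxLL2 : ∀ W ∈ relSH {x} d2.sh ∪ binSH (relSH {x} d2.sh)
      (starSH VI (relSH {x} d2.sh ∩ relSH t.vars d2.sh)), x ∈ W := by
    rintro W (h | ⟨X, hX, E, _, rfl⟩)
    · exact mem_of_relx h
    · exact Or.inl (mem_of_relx hX)
  have hsh' : rhoPSDsh VI (amguCore VI d1 x t).sh =
      rhoPSDsh VI (amguCore VI d2 x t).sh := by
    rw [amguCore_sh, amguCore_sh]
    by_cases hF : freeD d1 (HTerm.var x : HTerm Sig ar Vr) ∨ freeD d1 t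
    · rw [if_pos hF, if_pos (hcF.mp hF)]
      exact rho_eq_of_mutual
        (sh_congr_dir h1.1 h12 hxRel (fun S hS hw => key_F h1.1 h12 hS hw))
        (sh_congr_dir h2.1 h21 hxRel2 (fun S hS hw => key_F h2.1 h21 hS hw))
    · rw [if_neg hF, if_neg (fun h => hF (hcF.mpr h))]
      by_cases hLL : linD VI d1 (HTerm.var x : HTerm Sig ar Vr) ∧ linD VI d1 t
      · rw [if_pos hLL, if_pos (hcLL.mp hLL)]
        exact rho_eq_of_mutual
          (sh_congr_dir h1.1 h12 hxLL
            (fun S hS hw => key_LL hVI h1.1 h2.1 h12 hS hw))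
          (sh_congr_dir h2.1 h21 hxLL2
            (fun S hS hw => key_LL hVI h2.1 h1.1 h21 hS hw))
      · rw [if_neg hLL, if_neg (fun h => hLL (hcLL.mpr h))]
        by_cases hLX : linD VI d1 (HTerm.var x : HTerm Sig ar Vr)
        · rw [if_pos hLX, if_pos (hcLX.mp hLX)]
          exact rho_eq_of_mutual
            (sh_congr_dir h1.1 h12 hxStar
              (fun S hS hw => key_LX hVI h1.1 h2.1 h12 hS hw))
            (sh_congr_dir h2.1 h21 hxStar2
              (fun S hS hw => key_LX hVI h2.1 h1.1 h21 hS hw))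
        · rw [if_neg hLX, if_neg (fun h => hLX (hcLX.mpr h))]
          by_cases hLT : linD VI d1 t
          · rw [if_pos hLT, if_pos (hcLT.mp hLT)]
            exact rho_eq_of_mutual
              (sh_congr_dir h1.1 h12 hxRel
                (fun S hS hw => key_LT hVI h1.1 h2.1 h12 hS hw))
              (sh_congr_dir h2.1 h21 hxRel2
                (fun S hS hw => key_LT hVI h2.1 h1.1 h21 hS hw))
          · rw [if_neg hLT, if_neg (fun h => hLT (hcLT.mpr h))]
            exact rho_eq_of_mutual
              (sh_congr_dir h1.1 h12 hxStar
                (fun S hS hw => key_G hVI h12 hS hw))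
              (sh_congr_dir h2.1 h21 hxStar2
                (fun S hS hw => key_G hVI h21 hS hw))
  have hf' : (amguCore VI d1 x t).f = (amguCore VI d2 x t).f := by
    rw [amguCore_f, amguCore_f, hf, hsw_x, hsw_t]
    simp only [free_iff hf]
  have hsU : ⋃₀ (amguCore VI d1 x t).sh = ⋃₀ (amguCore VI d2 x t).sh := by
    have hsg1' := (wf_amguCore h1 x t).1
    have hsg2' := (wf_amguCore h2 x t).1
    refine Set.Subset.antisymm (sUnion_sub (VI := VI) ?_) (sUnion_sub (VI := VI) ?_)
    · exact hsh' ▸ rho_extensive hsg1'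
    · exact hsh'.symm ▸ rho_extensive hsg2'
  have hl' : (amguCore VI d1 x t).l = (amguCore VI d2 x t).l := by
    rw [amguCore_l, amguCore_l, hsU, hf', hl, hsw_x, hsw_t]
    simp only [lin_iff h12 h21 hl]
  show (⟨_, _, _⟩ : SFLElem Vr) = ⟨_, _, _⟩
  rw [hsh', hf', hl']

lemma bot_transfer {d1 d2 : SFLElem Vr} (h2 : d2.WF VI)
    (hf : d1.f = d2.f) (hl : d1.l = d2.l)
    (h21 : d2.sh ⊆ rhoPSDsh VI d1.sh) (hb : d1 = botS VI) :
    d2 = botS VI := by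
  have hsh1 : d1.sh = ∅ := by rw [hb]; rfl
  have hsh2 : d2.sh = ∅ := by
    have := h21
    rw [hsh1, rho_empty] at this
    exact Set.subset_empty_iff.mp this
  have hf2 : d2.f = VI := by rw [← hf, hb]; rfl
  have hl2 : d2.l = VI := by rw [← hl, hb]; rfl
  obtain ⟨s, f, l⟩ := d2
  simp only [botS, SFLElem.mk.injEq]
  exact ⟨hsh2, hf2, hl2⟩

lemma step_congr (hVI : VI.Finite) {d1 d2 : SFLElem Vr}
    (h1 : d1.WF VI) (h2 : d2.WF VI)
    (heq : rhoPSD VI d1 = rhoPSD VI d2) (x : Vr) (t : HTerm Sig ar Vr) :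
    rhoPSD VI (amguRT VI d1 x t) = rhoPSD VI (amguRT VI d2 x t) := by
  have hsh0 := congrArg SFLElem.sh heq
  have hf0 := congrArg SFLElem.f heq
  have hl0 := congrArg SFLElem.l heq
  have hsh : rhoPSDsh VI d1.sh = rhoPSDsh VI d2.sh := hsh0
  have hf : d1.f = d2.f := hf0
  have hl : d1.l = d2.l := hl0
  have h12 : d1.sh ⊆ rhoPSDsh VI d2.sh := hsh ▸ rho_extensive h1.1
  have h21 : d2.sh ⊆ rhoPSDsh VI d1.sh := hsh.symm ▸ rho_extensive h2.1
  by_cases hb : d1 = botS VI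
  · have hb2 : d2 = botS VI := bot_transfer h2 hf hl h21 hb
    unfold amguRT
    rw [if_pos hb, if_pos hb2]
  · have hb2 : d2 ≠ botS VI := fun h =>
      hb (bot_transfer h1 hf.symm hl.symm h12 h)
    unfold amguRT
    rw [if_neg hb, if_neg hb2]
    exact core_congr hVI h1 h2 hf hl h12 h21 x t

end Final

end RhoAux

end Congruence

/-- `ρ_PSD` is a congruence with respect to the abstract
unification operator `aunify_S`. -/
theorem rhoPSD_congruence_aunify
    {Sig Vr : Type} {ar : Sig → ℕ}
    (VI : Set Vr) (_hVI : VI.Finite)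
    (d1 d2 : SFLElem Vr) (_h1 : d1.WF VI) (_h2 : d2.WF VI)
    (_hpsd : rhoPSD VI d1 = rhoPSD VI d2)
    (bs : List (Vr × HTerm Sig ar Vr))
    (_hbs : ∀ b ∈ bs, insert b.1 b.2.vars ⊆ VI ∧ b.2 ≠ HTerm.var b.1) :
    rhoPSD VI (aunifyRT VI d1 bs) = rhoPSD VI (aunifyRT VI d2 bs) := by
  clear _hbs
  induction bs generalizing d1 d2 with
  | nil => exact _hpsd
  | cons b bs ih =>
      simp only [aunifyRT]
      exact ih (amguRT VI d1 b.1 b.2) (amguRT VI d2 b.1 b.2)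
        (RhoAux.wf_amguRT _h1 b.1 b.2) (RhoAux.wf_amguRT _h2 b.1 b.2)
        (RhoAux.step_congr _hVI _h1 _h2 _hpsd b.1 b.2)
end
end
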